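/- arXiv:2203.06484 — 9 statements merged into one kernel-verified Lean document; each statement's English description precedes it below -/
import Mathlib

section
/- Let λ ∈ ℂ be such that a(z) ≠ λ for every z with |z| = 1, and let w = (1/(2πi)) ∮_{|z|=1} a′(z)/(a(z) − λ) dz, where a′(z) = ∑_{j=-m}^{n} j a_j z^{j−1}. Then w is an integer equal to the winding number of a − λ, and the polynomial b_λ(z) = z^m (a(z) − λ) has exactly m + w roots, counted with multiplicity, in the open unit disk; that is, p(λ) = m + w. -/
open scoped ENNReal

noncomputable section

/-- The polynomial `b_λ(z) = z^m (a(z) - λ) = ∑_{k=0}^{m+n} a_{k-m} z^k - λ z^m`. -/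
def bpoly (m n : ℕ) (a : ℤ → ℂ) (lam : ℂ) : Polynomial ℂ :=
  (∑ k ∈ Finset.range (m + n + 1), Polynomial.C (a ((k : ℤ) - (m : ℤ))) * Polynomial.X ^ k)
    - Polynomial.C lam * Polynomial.X ^ m

/-- `p(λ)`: the number of roots of `b_λ` in the open unit disk, counted with multiplicity. -/
def rootCount (m n : ℕ) (a : ℤ → ℂ) (lam : ℂ) : ℕ :=
  Multiset.card ((bpoly m n a lam).roots.filter fun z => ‖z‖ < 1)

/-- The value `a(z) = ∑_{k=-m}^{n} a_k z^k` of the Laurent polynomial. -/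
def aval (m n : ℕ) (a : ℤ → ℂ) (z : ℂ) : ℂ :=
  ∑ k ∈ Finset.Icc (-(m : ℤ)) (n : ℤ), a k * z ^ k

/-- The image `a(𝕋)` of the unit circle under the Laurent polynomial `a`. -/
def aCircle (m n : ℕ) (a : ℤ → ℂ) : Set ℂ :=
  {w : ℂ | ∃ z : ℂ, ‖z‖ = 1 ∧ aval m n a z = w}

/-- The Hilbert space `ℓ²` of square-summable complex sequences (0-indexed). -/
abbrev ell2 := lp (fun _ : ℕ => ℂ) 2

/-- The derivative `a′(z) = ∑_{k=-m}^{n} k a_k z^{k-1}` of the Laurent polynomial. -/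
def aderiv (m n : ℕ) (a : ℤ → ℂ) (z : ℂ) : ℂ :=
  ∑ k ∈ Finset.Icc (-(m : ℤ)) (n : ℤ), (k : ℂ) * a k * z ^ (k - 1)

/-! For `z ≠ 0` we have `b_λ(z) = z^m (a(z) - λ)`, so logarithmic derivatives give
`a'/(a - λ) = b_λ'/b_λ - m/z` on the unit circle. Since `b_λ'/b_λ = ∑_r 1/(z - r)` over the
roots `r` of `b_λ`, and `∮ 1/(z - r) = 2πi` or `0` according as `r` lies inside or outside the
disk, `(1/2πi) ∮ b_λ'/b_λ = p(λ)`, while `(1/2πi) ∮ m/z = m`. -/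

open Polynomial Metric Complex Real

theorem CircleIntegrable.multiset_sum {E ι : Type*} [NormedAddCommGroup E] {f : ι → ℂ → E}
    {c : ℂ} {R : ℝ} (s : Multiset ι) (h : ∀ i ∈ s, CircleIntegrable (f i) c R) :
    CircleIntegrable (fun z => (s.map fun i => f i z).sum) c R := by
  induction s using Multiset.induction_on with
  | empty => simp [circleIntegrable_const]
  | cons i s ih =>
    simp only [Multiset.map_cons, Multiset.sum_cons]
    exact (h i (Multiset.mem_cons_self i s)).add (ih fun j hj => h j (Multiset.mem_cons_of_mem hj))

theorem circleIntegrable_sub_inv_of_notMem_sphere {c w : ℂ} {R : ℝ} (hR : 0 ≤ R)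
    (hw : w ∉ sphere c R) : CircleIntegrable (fun z => (z - w)⁻¹) c R :=
  circleIntegrable_sub_inv_iff.2 (Or.inr (by rwa [abs_of_nonneg hR]))

theorem circleIntegral_sub_inv_of_notMem_sphere {c w : ℂ} {R : ℝ} (hR : 0 ≤ R)
    (hw : w ∉ sphere c R) :
    (∮ z in C(c, R), (z - w)⁻¹) = if dist w c < R then 2 * π * I else 0 := by
  split_ifs with hball
  · exact circleIntegral.integral_sub_inv_of_mem_ball hball
  · have hout : w ∉ closedBall c R := fun h =>
      (sphere_union_ball (x := c) (ε := R) ▸ h).elim hw hball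
    have hdiff : ∀ z ∈ closedBall c R, DifferentiableAt ℂ (fun z => (z - w)⁻¹) z :=
      fun z hz => (differentiableAt_id.sub_const w).inv
        (sub_ne_zero.2 fun hzw => hout (hzw ▸ hz))
    exact circleIntegral_eq_zero_of_differentiable_on_off_countable hR Set.countable_empty
      (fun z hz => (hdiff z hz).continuousAt.continuousWithinAt)
      (fun z hz => hdiff z (ball_subset_closedBall hz.1))

theorem circleIntegral_multiset_sum_sub_inv {c : ℂ} {R : ℝ} (hR : 0 ≤ R) (s : Multiset ℂ)
    (hs : ∀ w ∈ s, w ∉ sphere c R) :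
    (∮ z in C(c, R), (s.map fun w => (z - w)⁻¹).sum)
      = 2 * π * I * Multiset.card (s.filter fun w => dist w c < R) := by
  induction s using Multiset.induction_on with
  | empty => simp [circleIntegral]
  | cons w s ih =>
    have hw := hs w (Multiset.mem_cons_self w s)
    have hs' : ∀ v ∈ s, v ∉ sphere c R := fun v hv => hs v (Multiset.mem_cons_of_mem hv)
    simp only [Multiset.map_cons, Multiset.sum_cons]
    rw [circleIntegral.integral_add (circleIntegrable_sub_inv_of_notMem_sphere hR hw)
        (CircleIntegrable.multiset_sum s fun v hv =>
          circleIntegrable_sub_inv_of_notMem_sphere hR (hs' v hv)),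
      ih hs', circleIntegral_sub_inv_of_notMem_sphere hR hw, Multiset.filter_cons]
    split_ifs <;> simp
    ring

/-- The argument principle for polynomials. -/
theorem Polynomial.circleIntegral_eval_derivative_div_eval {p : ℂ[X]} {c : ℂ} {R : ℝ}
    (hR : 0 ≤ R) (hp : ∀ z ∈ sphere c R, p.eval z ≠ 0) :
    (∮ z in C(c, R), p.derivative.eval z / p.eval z)
      = 2 * π * I * Multiset.card (p.roots.filter fun w => dist w c < R) := by
  have hroots : ∀ w ∈ p.roots, w ∉ sphere c R := fun w hw hsph =>
    hp w hsph (mem_roots'.1 hw).2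
  rw [← circleIntegral_multiset_sum_sub_inv hR p.roots hroots]
  refine circleIntegral.integral_congr hR fun z hz => ?_
  simp only [(IsAlgClosed.splits p).eval_derivative_div_eval_of_ne_zero (hp z hz), one_div]

section LaurentPolynomial

variable (m n : ℕ) (a : ℤ → ℂ) (lam : ℂ) {z : ℂ}

theorem hasDerivAt_aval (hz : z ≠ 0) : HasDerivAt (aval m n a) (aderiv m n a z) z := by
  unfold aval aderiv
  refine HasDerivAt.fun_sum fun k _ => ?_
  exact ((hasDerivAt_zpow k z (Or.inl hz)).const_mul (a k)).congr_deriv (by ring)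

theorem bpoly_eval (hz : z ≠ 0) : (bpoly m n a lam).eval z = z ^ m * (aval m n a z - lam) := by
  have hreindex : (∑ k ∈ Finset.range (m + n + 1), a ((k : ℤ) - m) * z ^ k)
      = ∑ k ∈ Finset.Icc (-(m : ℤ)) n, z ^ m * (a k * z ^ k) := by
    refine Finset.sum_nbij' (fun k : ℕ => (k : ℤ) - m) (fun k : ℤ => (k + m).toNat)
      ?_ ?_ ?_ ?_ ?_ <;> intro k hk <;> simp only [Finset.mem_range, Finset.mem_Icc] at hk ⊢
    · omega
    · omega
    · omega
    · omega
    · rw [zpow_sub₀ hz, zpow_natCast, zpow_natCast]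
      field_simp
  simp only [bpoly, eval_sub, eval_finsetSum, eval_mul, eval_C, eval_pow, eval_X, hreindex, aval,
    Finset.mul_sum, mul_sub]
  ring

theorem aderiv_div_aval_sub (hz : z ≠ 0) (hlam : aval m n a z ≠ lam) :
    aderiv m n a z / (aval m n a z - lam)
      = (bpoly m n a lam).derivative.eval z / (bpoly m n a lam).eval z - m * z⁻¹ := by
  have hA : HasDerivAt (fun z => aval m n a z - lam) (aderiv m n a z) z :=
    (hasDerivAt_aval m n a hz).sub_const lam
  have hb : (fun z => (bpoly m n a lam).eval z) =ᶠ[nhds z] fun z => z ^ m * (aval m n a z - lam) :=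
    Filter.eventually_of_mem (isOpen_ne.mem_nhds hz) fun _ hw => bpoly_eval m n a lam hw
  have hlog : logDeriv (fun z => (bpoly m n a lam).eval z) z
      = m / z + aderiv m n a z / (aval m n a z - lam) := by
    rw [(logDeriv_congr_nhds hb).eq_of_nhds,
      logDeriv_mul (f := (· ^ m)) (g := fun z => aval m n a z - lam) z (pow_ne_zero m hz)
        (sub_ne_zero.2 hlam) (differentiableAt_pow m) hA.differentiableAt,
      logDeriv_pow, logDeriv_apply, hA.deriv]
  rw [logDeriv_apply, Polynomial.deriv] at hlog
  rw [hlog, div_eq_mul_inv]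
  ring

theorem circleIntegral_aderiv_div_aval_sub (hlam : ∀ z : ℂ, ‖z‖ = 1 → aval m n a z ≠ lam) :
    (∮ z in C(0, 1), aderiv m n a z / (aval m n a z - lam))
      = 2 * π * I * (rootCount m n a lam - m) := by
  set b := bpoly m n a lam
  have hsphere : ∀ z ∈ sphere (0 : ℂ) 1, z ≠ 0 ∧ aval m n a z ≠ lam := fun z hz => by
    rw [mem_sphere_zero_iff_norm] at hz
    exact ⟨norm_ne_zero_iff.1 (hz.symm ▸ one_ne_zero), hlam z hz⟩
  have hb : ∀ z ∈ sphere (0 : ℂ) 1, b.eval z ≠ 0 := fun z hz => by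
    rw [bpoly_eval m n a lam (hsphere z hz).1]
    exact mul_ne_zero (pow_ne_zero m (hsphere z hz).1) (sub_ne_zero.2 (hsphere z hz).2)
  have hroots : rootCount m n a lam = Multiset.card (b.roots.filter fun z => dist z 0 < 1) := by
    simp only [rootCount, dist_zero_right, b]
  have hinv : (∮ z in C(0, 1), z⁻¹) = 2 * π * I := by
    simpa using circleIntegral.integral_sub_center_inv (0 : ℂ) one_ne_zero
  rw [circleIntegral.integral_congr zero_le_one fun z hz =>
      aderiv_div_aval_sub m n a lam (hsphere z hz).1 (hsphere z hz).2,
    circleIntegral.integral_sub ?_ ?_, circleIntegral.integral_const_mul,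
    Polynomial.circleIntegral_eval_derivative_div_eval zero_le_one hb, hroots, hinv]
  · ring
  · exact (b.derivative.continuous.continuousOn.div b.continuous.continuousOn hb).circleIntegrable
      zero_le_one
  · have := circleIntegrable_sub_inv_of_notMem_sphere zero_le_one (c := 0) (w := 0) (by simp)
    simp only [sub_zero] at this
    exact this.const_mul (m : ℂ)

end LaurentPolynomial

theorem stmt_0_general (m n : ℕ) (a : ℤ → ℂ)
    (lam : ℂ) (hlam : ∀ z : ℂ, ‖z‖ = 1 → aval m n a z ≠ lam) :
    ∃ w : ℤ,
      (1 / (2 * Real.pi * Complex.I)) *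
          (∮ z in C(0, 1), aderiv m n a z / (aval m n a z - lam)) = (w : ℂ) ∧
      (rootCount m n a lam : ℤ) = (m : ℤ) + w := by
  refine ⟨rootCount m n a lam - m, ?_, by ring⟩
  have h2πI : (2 * π * I : ℂ) ≠ 0 := by simp [pi_ne_zero, I_ne_zero]
  rw [circleIntegral_aderiv_div_aval_sub m n a lam hlam]
  field_simp
  push_cast
  ring

/-- if `a(z) ≠ λ` on the unit circle, then the winding-number integral
`(1/(2πi)) ∮_{|z|=1} a′(z)/(a(z) − λ) dz` is an integer `w`, and `b_λ(z) = z^m (a(z) − λ)`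
has exactly `m + w` roots (with multiplicity) in the open unit disk, i.e. `p(λ) = m + w`. -/
theorem stmt_0 (m n : ℕ) (hm : 1 ≤ m) (hn : 1 ≤ n) (a : ℤ → ℂ)
    (ham : a (-(m : ℤ)) ≠ 0) (han : a (n : ℤ) ≠ 0)
    (hsupp : ∀ k : ℤ, (k < -(m : ℤ) ∨ (n : ℤ) < k) → a k = 0)
    (lam : ℂ) (hlam : ∀ z : ℂ, ‖z‖ = 1 → aval m n a z ≠ lam) :
    ∃ w : ℤ,
      (1 / (2 * Real.pi * Complex.I)) *
          (∮ z in C(0, 1), aderiv m n a z / (aval m n a z - lam)) = (w : ℂ) ∧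
      (rootCount m n a lam : ℤ) = (m : ℤ) + w :=
  stmt_0_general m n a lam hlam
end
end

section
/- If the operator A = T(a) + E is invertible on ℓ² (i.e., A is a unit in the algebra of bounded linear operators on ℓ²), then the Toeplitz operator T(a) is invertible on ℓ². -/
/-!
Since `E` has finite rank, `T = A (1 - A⁻¹ E)` is invertible as soon as it is injective: an
injective finite-rank perturbation of the identity is onto. The same holds for `T* = A* - E*`,
so it suffices that `T` or `T*` be injective, which is Coburn's lemma.

For a Laurent polynomial symbol Coburn's lemma comes from counting the `m + n` roots of
`b(z) = z^m a(z)`. A nonzero `w` with `conj w ∈ ker T*` makes `b(z) ∑ w_j z^j` a polynomial of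
degree `< m`; a nonzero `v ∈ ker T` makes `b̃(z) ∑ v_j z^j` a polynomial of degree `< n`, where
`b̃ = z^(m+n) b(1/z)` is the reverse of `b`. A power series with coefficients tending to `0` cannot
cancel a root of its polynomial factor in the closed unit disc (beyond the degree of the product,
`H_i = z H_{i+1}` makes `|H_i|` nondecreasing). So `b` has fewer than `m` roots in the closed
disc and, read through `b̃`, fewer than `n` outside it: a contradiction.
-/

open scoped ENNReal

noncomputable section

open Function Filter Topology Polynomial ContinuousLinearMap
open scoped ComplexConjugate

theorem LinearMap.surjective_one_sub_of_injective {K V : Type*} [DivisionRing K] [AddCommGroup V]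
    [Module K V] {f : Module.End K V} [FiniteDimensional K (range f)]
    (h : Injective ⇑(1 - f)) : Surjective ⇑(1 - f) := by
  have hmaps : ∀ x ∈ range f, (1 - f) x ∈ range f :=
    fun x hx => sub_mem hx (mem_range_self f x)
  intro y
  obtain ⟨x, -, hx⟩ := (injOn_iff_surjOn hmaps).1 h.injOn (mem_range_self f y)
  refine ⟨y + x, ?_⟩
  simp only [sub_apply, Module.End.one_apply, map_add] at hx ⊢
  rw [← hx]
  abel

theorem ContinuousLinearMap.isUnit_of_isUnit_add_of_injective {𝕜 X : Type*}
    [NontriviallyNormedField 𝕜] [NormedAddCommGroup X] [NormedSpace 𝕜 X] [CompleteSpace X]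
    {T E : X →L[𝕜] X} (hA : IsUnit (T + E))
    [FiniteDimensional 𝕜 (LinearMap.range (E : X →ₗ[𝕜] X))] (hT : Injective T) : IsUnit T := by
  set B : X →L[𝕜] X := ↑hA.unit⁻¹
  have hfac : T = (T + E) * (1 - B * E) := by
    rw [mul_sub, mul_one, ← mul_assoc, hA.mul_val_inv, one_mul, add_sub_cancel_right]
  have : FiniteDimensional 𝕜 (LinearMap.range ((B * E : X →L[𝕜] X) : X →ₗ[𝕜] X)) := by
    rw [toLinearMap_mul, Module.End.mul_eq_comp, LinearMap.range_comp]
    infer_instance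
  have hinj : Injective ⇑(1 - B * E) :=
    .of_comp (f := ⇑(T + E)) (by rwa [hfac] at hT)
  have hsurj : Surjective ⇑(1 - B * E) :=
    LinearMap.surjective_one_sub_of_injective (f := ((B * E : X →L[𝕜] X) : X →ₗ[𝕜] X)) hinj
  refine isUnit_iff_bijective.2 ⟨hT, ?_⟩
  rw [hfac]
  exact (isUnit_iff_bijective.1 hA).2.comp hsurj

namespace Polynomial

variable {𝕜 : Type*} [NormedField 𝕜]

theorem tendsto_coeff_coe_mul {F : PowerSeries 𝕜}
    (hF : Tendsto (fun i => PowerSeries.coeff i F) atTop (𝓝 0)) (c : 𝕜[X]) :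
    Tendsto (fun i => PowerSeries.coeff i ((c : PowerSeries 𝕜) * F)) atTop (𝓝 0) := by
  induction c using Polynomial.induction_on' with
  | add p q hp hq => simpa [add_mul] using hp.add hq
  | monomial n a =>
    have hshift : Tendsto (fun i => a * PowerSeries.coeff (i - n) F) atTop (𝓝 0) := by
      simpa using (hF.comp (tendsto_sub_atTop_nat n)).const_mul a
    refine hshift.congr' ((eventually_ge_atTop n).mono fun i hi => ?_)
    simp [← C_mul_X_pow_eq_monomial, mul_assoc, PowerSeries.coeff_X_pow_mul', hi]

theorem exists_coe_eq_of_coe_X_sub_C_mul_eq {z : 𝕜} (hz : ‖z‖ ≤ 1) {H : PowerSeries 𝕜}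
    (hH : Tendsto (fun i => PowerSeries.coeff i H) atTop (𝓝 0)) {q : 𝕜[X]}
    (hq : ((X - C z : 𝕜[X]) : PowerSeries 𝕜) * H = q) : ∃ h : 𝕜[X], (h : PowerSeries 𝕜) = H := by
  set N := q.natDegree
  have hrec : ∀ i, N ≤ i → PowerSeries.coeff i H = z * PowerSeries.coeff (i + 1) H := by
    intro i hi
    have := congrArg (PowerSeries.coeff (i + 1)) hq
    rwa [coeff_coe, coeff_eq_zero_of_natDegree_lt (by omega), coe_sub, coe_X, coe_C, sub_mul,
      map_sub, PowerSeries.coeff_succ_X_mul, PowerSeries.coeff_C_mul, sub_eq_zero] at this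
  have hmono : Monotone fun k => ‖PowerSeries.coeff (k + N) H‖ := by
    refine monotone_nat_of_le_succ fun k => ?_
    rw [add_right_comm, hrec (k + N) (by omega), norm_mul]
    exact mul_le_of_le_one_left (norm_nonneg _) hz
  have hlim : Tendsto (fun k => ‖PowerSeries.coeff (k + N) H‖) atTop (𝓝 0) := by
    simpa using (hH.comp (tendsto_add_atTop_nat N)).norm
  refine ⟨PowerSeries.trunc N H, PowerSeries.ext fun i => ?_⟩
  rw [coeff_coe, PowerSeries.coeff_trunc]
  split_ifs with hi
  · rfl
  · obtain ⟨k, rfl⟩ := Nat.exists_eq_add_of_le' (not_lt.1 hi)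
    exact (norm_le_zero_iff.1 (hmono.ge_of_tendsto hlim k)).symm

theorem prod_X_sub_C_dvd_of_coe_mul_eq {S : Multiset 𝕜} (hS : ∀ z ∈ S, ‖z‖ ≤ 1)
    {F : PowerSeries 𝕜} (hF : Tendsto (fun i => PowerSeries.coeff i F) atTop (𝓝 0)) {q : 𝕜[X]}
    (hq : (((S.map fun z => X - C z).prod : 𝕜[X]) : PowerSeries 𝕜) * F = q) :
    (S.map fun z => X - C z).prod ∣ q := by
  induction S using Multiset.induction generalizing q with
  | empty => simp
  | cons z S ih =>
    rw [Multiset.map_cons, Multiset.prod_cons, coe_mul, mul_assoc] at hq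
    obtain ⟨h, hh⟩ := exists_coe_eq_of_coe_X_sub_C_mul_eq (hS z (by simp))
      (tendsto_coeff_coe_mul hF _) hq
    rw [← hh, ← coe_mul, coe_inj] at hq
    rw [Multiset.map_cons, Multiset.prod_cons, ← hq]
    exact mul_dvd_mul_left _ (ih (fun w hw => hS w (by simp [hw])) hh.symm)

theorem card_le_natDegree_of_coe_mul_eq {S : Multiset 𝕜} (hS : ∀ z ∈ S, ‖z‖ ≤ 1) {c q : 𝕜[X]}
    (hSc : (S.map fun z => X - C z).prod ∣ c) (hq0 : q ≠ 0) {F : PowerSeries 𝕜}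
    (hF : Tendsto (fun i => PowerSeries.coeff i F) atTop (𝓝 0))
    (hq : (c : PowerSeries 𝕜) * F = q) : Multiset.card S ≤ q.natDegree := by
  obtain ⟨c', rfl⟩ := hSc
  rw [coe_mul, mul_assoc] at hq
  have hdvd := prod_X_sub_C_dvd_of_coe_mul_eq hS (tendsto_coeff_coe_mul hF c') hq
  simpa [natDegree_multiset_prod_X_sub_C_eq_card] using natDegree_le_of_dvd hdvd hq0

section Field

variable {K : Type*} [Field K]

theorem prod_multiset_filter_X_sub_C_dvd (p : K[X]) (P : K → Prop) [DecidablePred P] :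
    ((p.roots.filter P).map fun z => X - C z).prod ∣ p :=
  (Multiset.prod_dvd_prod_of_le (Multiset.map_le_map (Multiset.filter_le _ _))).trans
    (prod_multiset_X_sub_C_dvd p)

theorem X_sub_C_inv_dvd_reverse_X_sub_C {z : K} (hz : z ≠ 0) : X - C z⁻¹ ∣ (X - C z).reverse := by
  rw [dvd_iff_isRoot]
  simp [reverse, reflect_sub, hz]

theorem prod_X_sub_C_inv_dvd_reverse {S : Multiset K} (hS : ∀ z ∈ S, z ≠ 0) :
    (S.map fun z => X - C z⁻¹).prod ∣ (S.map fun z => X - C z).prod.reverse := by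
  induction S using Multiset.induction with
  | empty => simp
  | cons z S ih =>
    simp only [Multiset.map_cons, Multiset.prod_cons, reverse_mul_of_domain]
    exact mul_dvd_mul (X_sub_C_inv_dvd_reverse_X_sub_C (hS z (by simp)))
      (ih fun w hw => hS w (by simp [hw]))

end Field

end Polynomial

theorem ell2_tendsto_apply (x : ell2) : Tendsto (fun i => x i) atTop (𝓝 0) := by
  have := ((lp.memℓp x).summable (by norm_num)).tendsto_atTop_zero.sqrt
  simp only [ENNReal.toReal_ofNat, Real.rpow_two, Real.sqrt_sq (norm_nonneg _),
    Real.sqrt_zero] at this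
  exact tendsto_zero_iff_norm_tendsto_zero.2 this

theorem ell2_eq_sum_single {x : ell2} {k : ℕ} (hx : ∀ i, k ≤ i → x i = 0) :
    ∑ i ∈ Finset.range k, lp.single 2 i (x i) = x := by
  ext j
  rw [lp.coeFn_sum, Finset.sum_apply]
  simp only [lp.coeFn_single, Pi.single_apply, Finset.sum_ite_eq, Finset.mem_range]
  split_ifs with hj
  · rfl
  · exact (hx j (not_lt.1 hj)).symm

theorem ell2_apply_eq_inner (x : ell2) (i : ℕ) : x i = inner ℂ (lp.single 2 i (1 : ℂ)) x := by
  simp [lp.inner_single_left]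

theorem finiteDimensional_range_of_adjoint_single_eq_zero {S : ell2 →L[ℂ] ell2} {k : ℕ}
    (h : ∀ i, k ≤ i → adjoint S (lp.single 2 i 1) = 0) :
    FiniteDimensional ℂ (LinearMap.range (S : ell2 →ₗ[ℂ] ell2)) := by
  set B : Set ell2 := (fun i => lp.single 2 i (1 : ℂ)) '' (Finset.range k : Set ℕ)
  have := FiniteDimensional.span_of_finite ℂ ((Finset.range k).finite_toSet.image _ : B.Finite)
  refine Submodule.finiteDimensional_of_le (S₂ := Submodule.span ℂ B) ?_
  rintro _ ⟨x, rfl⟩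
  have hx : ∀ i, k ≤ i → S x i = 0 := fun i hi => by
    rw [ell2_apply_eq_inner, ← adjoint_inner_left, h i hi, inner_zero_left]
  change S x ∈ _
  rw [← ell2_eq_sum_single hx]
  refine Submodule.sum_mem _ fun i hi => ?_
  rw [← mul_one (S x i), ← smul_eq_mul, lp.single_smul]
  exact Submodule.smul_mem _ _ (Submodule.subset_span ⟨i, hi, rfl⟩)

theorem adjoint_single_eq_zero {S : ell2 →L[ℂ] ell2} {i : ℕ}
    (h : ∀ j, S (lp.single 2 j 1) i = 0) : adjoint S (lp.single 2 i 1) = 0 := by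
  ext j
  rw [ell2_apply_eq_inner, adjoint_inner_right, ← inner_conj_symm, ← ell2_apply_eq_inner, h]
  simp

section LaurentSymbol

variable {m n : ℕ} {a : ℤ → ℂ}

theorem coeff_bpoly_zero (ha : ∀ k : ℤ, (n : ℤ) < k → a k = 0) (k : ℕ) :
    (bpoly m n a 0).coeff k = a (k - m) := by
  simp only [bpoly, map_zero, zero_mul, sub_zero, finsetSum_coeff, coeff_C_mul_X_pow,
    Finset.sum_ite_eq, Finset.mem_range]
  split_ifs with hk
  · rfl
  · exact (ha _ (by omega)).symm

theorem natDegree_bpoly_zero (ha : ∀ k : ℤ, (n : ℤ) < k → a k = 0) (han : a n ≠ 0) :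
    (bpoly m n a 0).natDegree = m + n := by
  refine natDegree_eq_of_le_of_coeff_ne_zero
    ((natDegree_le_iff_coeff_eq_zero).2 fun k hk => ?_) ?_
  · rw [coeff_bpoly_zero ha]
    exact ha _ (by omega)
  · rwa [coeff_bpoly_zero ha, Nat.cast_add, add_sub_cancel_left]

theorem bpoly_zero_ne_zero (ha : ∀ k : ℤ, (n : ℤ) < k → a k = 0) (han : a n ≠ 0) :
    bpoly m n a 0 ≠ 0 := fun h => han <| by
  rw [← add_sub_cancel_left (m : ℤ) n, ← Nat.cast_add, ← coeff_bpoly_zero ha, h, coeff_zero]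

theorem bpoly_zero_neg_eq_reverse (hsupp : ∀ k : ℤ, (k < -(m : ℤ) ∨ (n : ℤ) < k) → a k = 0)
    (han : a n ≠ 0) : bpoly n m (fun k => a (-k)) 0 = (bpoly m n a 0).reverse := by
  have ha : ∀ k : ℤ, (n : ℤ) < k → a k = 0 := fun k hk => hsupp k (.inr hk)
  ext k
  rw [coeff_reverse, natDegree_bpoly_zero ha han, coeff_bpoly_zero ha,
    coeff_bpoly_zero fun k hk => hsupp _ (.inl (by omega))]
  by_cases hk : k ≤ m + n
  · rw [revAt_le hk]
    congr 1
    push_cast [hk]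
    ring
  · rw [revAt_eq_self_of_lt (by omega), hsupp _ (.inl (by omega)), hsupp _ (.inr (by omega))]

theorem coeff_bpoly_zero_mul_mk_eq_zero (ha : ∀ k : ℤ, (n : ℤ) < k → a k = 0) {u : ℕ → ℂ}
    (hu : ∀ i : ℕ, ∑ j ∈ Finset.range (i + m + 1), a ((i : ℤ) - j) * u j = 0) {N : ℕ}
    (hN : m ≤ N) :
    PowerSeries.coeff N ((bpoly m n a 0 : PowerSeries ℂ) * PowerSeries.mk u) = 0 := by
  obtain ⟨i, rfl⟩ := Nat.exists_eq_add_of_le' hN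
  rw [mul_comm, PowerSeries.coeff_mul, Finset.Nat.sum_antidiagonal_eq_sum_range_succ fun j l =>
    PowerSeries.coeff j (PowerSeries.mk u) * PowerSeries.coeff l (bpoly m n a 0 : PowerSeries ℂ)]
  refine (Finset.sum_congr rfl fun j hj => ?_).trans (hu i)
  rw [PowerSeries.coeff_mk, coeff_coe, coeff_bpoly_zero ha, mul_comm]
  congr 2
  have : j ≤ i + m := Nat.lt_succ_iff.1 (Finset.mem_range.1 hj)
  push_cast [this]
  ring

theorem card_lt_of_toeplitz_kernel (ha : ∀ k : ℤ, (n : ℤ) < k → a k = 0)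
    (hb : bpoly m n a 0 ≠ 0) {S : Multiset ℂ} (hS : ∀ z ∈ S, ‖z‖ ≤ 1)
    (hSb : (S.map fun z => X - C z).prod ∣ bpoly m n a 0) {u : ℕ → ℂ}
    (hu0 : Tendsto u atTop (𝓝 0)) (hu_ne : u ≠ 0)
    (hu : ∀ i : ℕ, ∑ j ∈ Finset.range (i + m + 1), a ((i : ℤ) - j) * u j = 0) :
    Multiset.card S < m := by
  set P := (bpoly m n a 0 : PowerSeries ℂ) * PowerSeries.mk u
  have hP : P = PowerSeries.trunc m P := by
    refine PowerSeries.ext fun i => ?_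
    rw [coeff_coe, PowerSeries.coeff_trunc]
    split_ifs with hi
    · rfl
    · exact coeff_bpoly_zero_mul_mk_eq_zero ha hu (not_lt.1 hi)
  have hP0 : PowerSeries.trunc m P ≠ 0 := by
    intro h
    rw [h, coe_zero, mul_eq_zero, coe_eq_zero_iff] at hP
    refine hP.elim hb fun hu' => hu_ne (funext fun i => ?_)
    simpa using congrArg (PowerSeries.coeff i) hu'
  calc Multiset.card S ≤ (PowerSeries.trunc m P).natDegree :=
        card_le_natDegree_of_coe_mul_eq hS hSb hP0 (F := PowerSeries.mk u) (by simpa using hu0) hP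
    _ < m := (natDegree_lt_iff_degree_lt hP0).2 (PowerSeries.degree_trunc_lt _ _)

theorem card_roots_bpoly_zero_filter_norm_le_one_lt (ha : ∀ k : ℤ, (n : ℤ) < k → a k = 0)
    (han : a n ≠ 0) {w : ℕ → ℂ} (hw0 : Tendsto w atTop (𝓝 0)) (hw_ne : w ≠ 0)
    (hw : ∀ i : ℕ, ∑ j ∈ Finset.range (i + m + 1), a ((i : ℤ) - j) * w j = 0) :
    Multiset.card ((bpoly m n a 0).roots.filter fun z => ‖z‖ ≤ 1) < m :=
  card_lt_of_toeplitz_kernel ha (bpoly_zero_ne_zero ha han)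
    (fun _ hz => (Multiset.mem_filter.1 hz).2) (prod_multiset_filter_X_sub_C_dvd _ _) hw0 hw_ne hw

theorem card_roots_bpoly_zero_filter_one_lt_norm_lt
    (hsupp : ∀ k : ℤ, (k < -(m : ℤ) ∨ (n : ℤ) < k) → a k = 0) (han : a n ≠ 0) {v : ℕ → ℂ}
    (hv0 : Tendsto v atTop (𝓝 0)) (hv_ne : v ≠ 0)
    (hv : ∀ i : ℕ, ∑ j ∈ Finset.range (i + n + 1), a ((j : ℤ) - i) * v j = 0) :
    Multiset.card ((bpoly m n a 0).roots.filter fun z => 1 < ‖z‖) < n := by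
  set S := (bpoly m n a 0).roots.filter fun z => 1 < ‖z‖
  have hS0 : ∀ z ∈ S, z ≠ 0 := fun z hz h0 => by norm_num [S, h0] at hz
  have hS_inv : ∀ z ∈ S.map (·⁻¹), ‖z‖ ≤ 1 := by
    simp only [Multiset.mem_map]
    rintro _ ⟨z, hz, rfl⟩
    rw [norm_inv]
    exact inv_le_one_of_one_le₀ (Multiset.mem_filter.1 hz).2.le
  have hS_dvd : ((S.map (·⁻¹)).map fun z => X - C z).prod ∣ bpoly n m (fun k => a (-k)) 0 := by
    obtain ⟨r, hr⟩ := prod_multiset_filter_X_sub_C_dvd (bpoly m n a 0) fun z => 1 < ‖z‖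
    rw [bpoly_zero_neg_eq_reverse hsupp han, Multiset.map_map, hr, reverse_mul_of_domain]
    exact (prod_X_sub_C_inv_dvd_reverse hS0).mul_right _
  have hc : bpoly n m (fun k => a (-k)) 0 ≠ 0 := by
    rw [bpoly_zero_neg_eq_reverse hsupp han, Ne, reverse_eq_zero]
    exact bpoly_zero_ne_zero (fun k hk => hsupp k (.inr hk)) han
  simpa using card_lt_of_toeplitz_kernel (fun k hk => hsupp _ (.inl (by omega))) hc hS_inv
    hS_dvd hv0 hv_ne (by simpa [neg_sub] using hv)

theorem eq_zero_or_eq_zero_of_toeplitz_kernel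
    (hsupp : ∀ k : ℤ, (k < -(m : ℤ) ∨ (n : ℤ) < k) → a k = 0) (han : a n ≠ 0) {v w : ℕ → ℂ}
    (hv0 : Tendsto v atTop (𝓝 0)) (hw0 : Tendsto w atTop (𝓝 0))
    (hv : ∀ i : ℕ, ∑ j ∈ Finset.range (i + n + 1), a ((j : ℤ) - i) * v j = 0)
    (hw : ∀ i : ℕ, ∑ j ∈ Finset.range (i + m + 1), a ((i : ℤ) - j) * w j = 0) :
    v = 0 ∨ w = 0 := by
  by_contra! ⟨hv_ne, hw_ne⟩
  have ha : ∀ k : ℤ, (n : ℤ) < k → a k = 0 := fun k hk => hsupp k (.inr hk)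
  have hin := card_roots_bpoly_zero_filter_norm_le_one_lt ha han hw0 hw_ne hw
  have hout := card_roots_bpoly_zero_filter_one_lt_norm_lt hsupp han hv0 hv_ne hv
  have hsplit := Multiset.filter_add_not (fun z => ‖z‖ ≤ 1) (bpoly m n a 0).roots
  simp only [not_le] at hsplit
  have hcard := congrArg Multiset.card hsplit
  rw [Multiset.card_add, IsAlgClosed.card_roots_eq_natDegree, natDegree_bpoly_zero ha han] at hcard
  omega

theorem toeplitz_single_apply (ha : ∀ k : ℤ, (n : ℤ) < k → a k = 0)
    {T : ell2 →L[ℂ] ell2}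
    (hT : ∀ (v : ell2) (i : ℕ), T v i = ∑ j ∈ Finset.range (i + n + 1), a ((j : ℤ) - i) * v j)
    (i k : ℕ) : T (lp.single 2 i 1) k = a ((i : ℤ) - k) := by
  simp only [hT, lp.coeFn_single, Pi.single_apply, mul_ite, mul_one, mul_zero,
    Finset.sum_ite_eq', Finset.mem_range]
  split_ifs with hi
  · rfl
  · exact (ha _ (by omega)).symm

theorem sum_mul_conj_eq_zero_of_adjoint_toeplitz_apply_eq_zero
    (hsupp : ∀ k : ℤ, (k < -(m : ℤ) ∨ (n : ℤ) < k) → a k = 0) {T : ell2 →L[ℂ] ell2}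
    (hT : ∀ (v : ell2) (i : ℕ), T v i = ∑ j ∈ Finset.range (i + n + 1), a ((j : ℤ) - i) * v j)
    {w : ell2} (hw : adjoint T w = 0) (i : ℕ) :
    ∑ j ∈ Finset.range (i + m + 1), a ((i : ℤ) - j) * conj (w j) = 0 := by
  have h : inner ℂ w (T (lp.single 2 i 1)) = 0 := by
    rw [← adjoint_inner_left, hw, inner_zero_left]
  have hcol := toeplitz_single_apply (fun k hk => hsupp k (.inr hk)) hT i
  rw [lp.inner_eq_tsum, tsum_eq_sum (s := Finset.range (i + m + 1))] at h
  · simpa [hcol, mul_comm] using h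
  · intro j hj
    rw [Finset.mem_range] at hj
    rw [hcol, hsupp _ (.inl (by omega))]
    simp

theorem injective_or_injective_adjoint_of_toeplitz
    (hsupp : ∀ k : ℤ, (k < -(m : ℤ) ∨ (n : ℤ) < k) → a k = 0) (han : a n ≠ 0)
    {T : ell2 →L[ℂ] ell2}
    (hT : ∀ (v : ell2) (i : ℕ), T v i = ∑ j ∈ Finset.range (i + n + 1), a ((j : ℤ) - i) * v j) :
    Injective T ∨ Injective (adjoint T) := by
  simp only [injective_iff_map_eq_zero]
  by_contra! ⟨⟨v, hv, hv_ne⟩, ⟨w, hw, hw_ne⟩⟩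
  have hw0 : Tendsto (fun j => conj (w j)) atTop (𝓝 0) := by
    simpa [Function.comp_def] using (Complex.continuous_conj.tendsto 0).comp (ell2_tendsto_apply w)
  rcases eq_zero_or_eq_zero_of_toeplitz_kernel hsupp han (ell2_tendsto_apply v) hw0
    (fun i => by rw [← hT, hv, lp.coeFn_zero, Pi.zero_apply])
    (sum_mul_conj_eq_zero_of_adjoint_toeplitz_apply_eq_zero hsupp hT hw) with h | h
  · exact hv_ne (lp.ext h)
  · exact hw_ne (lp.ext (funext fun j => by simpa using congrFun h j))

end LaurentSymbol

theorem stmt_1_general (m n : ℕ) (a : ℤ → ℂ)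
    (han : a (n : ℤ) ≠ 0)
    (hsupp : ∀ k : ℤ, (k < -(m : ℤ) ∨ (n : ℤ) < k) → a k = 0)
    (k₁ k₂ : ℕ)
    (T E A : ell2 →L[ℂ] ell2)
    (hT : ∀ (v : ell2) (i : ℕ),
      (T v) i = ∑ j ∈ Finset.range (i + n + 1), a ((j : ℤ) - (i : ℤ)) * v j)
    (hE : ∀ i j : ℕ, (k₁ ≤ i ∨ k₂ ≤ j) → (E (lp.single 2 j 1)) i = 0)
    (hA : A = T + E)
    (hinv : IsUnit A) : IsUnit T := by
  subst hA
  have : FiniteDimensional ℂ (LinearMap.range (E : ell2 →ₗ[ℂ] ell2)) :=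
    finiteDimensional_range_of_adjoint_single_eq_zero fun i hi =>
      adjoint_single_eq_zero fun j => hE i j (.inl hi)
  have : FiniteDimensional ℂ (LinearMap.range (adjoint E : ell2 →ₗ[ℂ] ell2)) :=
    finiteDimensional_range_of_adjoint_single_eq_zero fun j hj => by
      rw [adjoint_adjoint]
      exact lp.ext (funext fun i => hE i j (.inr hj))
  rcases injective_or_injective_adjoint_of_toeplitz hsupp han hT with h | h
  · exact isUnit_of_isUnit_add_of_injective hinv h
  · rw [← isUnit_star, star_eq_adjoint]
    refine isUnit_of_isUnit_add_of_injective (E := adjoint E) ?_ h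
    rwa [← map_add, ← star_eq_adjoint, isUnit_star]

/-- if the quasi-Toeplitz operator `A = T(a) + E` is invertible on `ℓ²`,
then the Toeplitz operator `T(a)` is invertible on `ℓ²`. -/
theorem stmt_1 (m n : ℕ) (hm : 1 ≤ m) (hn : 1 ≤ n) (a : ℤ → ℂ)
    (ham : a (-(m : ℤ)) ≠ 0) (han : a (n : ℤ) ≠ 0)
    (hsupp : ∀ k : ℤ, (k < -(m : ℤ) ∨ (n : ℤ) < k) → a k = 0)
    (k₁ k₂ : ℕ) (hk₁ : 1 ≤ k₁) (hk₂ : 1 ≤ k₂)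
    (T E A : ell2 →L[ℂ] ell2)
    (hT : ∀ (v : ell2) (i : ℕ),
      (T v) i = ∑ j ∈ Finset.range (i + n + 1), a ((j : ℤ) - (i : ℤ)) * v j)
    (hE : ∀ i j : ℕ, (k₁ ≤ i ∨ k₂ ≤ j) → (E (lp.single 2 j 1)) i = 0)
    (hA : A = T + E)
    (hinv : IsUnit A) : IsUnit T :=
  stmt_1_general m n a han hsupp k₁ k₂ T E A hT hE hA hinv
end
end

section
/- Let q = max(m, k₁) and let λ ∈ ℂ with λ ∉ a(𝕋). If p(λ) > q, then λ is an eigenvalue of A = T(a) + E: there exists a nonzero v ∈ ℓ² with Av = λv. (In particular, every point of a connected component of ℂ ∖ a(𝕋) on which p > q is an eigenvalue of A.) -/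
/-! Let `S` be the shift of sequences. For `i ≥ m`, row `i` of `T(a) - λ` applied to `u` is
entry `i - m` of `b_λ(S) u`, so a solution of the recurrence `b_λ(S) u = 0` satisfies
`(T(a) u)_i = λ u_i` for `i ≥ m`, while `(E u)_i = 0` for `i ≥ k₁` whatever `u` is. If `z` is a
root of `b_λ` of multiplicity `r`, the sequences `j ↦ j^t z^j`, `t < r`, are generalized
eigenvectors of `S` for the eigenvalue `z` killed by `(S - z)^r`, hence solve the recurrence, and
they lie in `ℓ²` when `|z| < 1`. Generalized eigenvectors for distinct eigenvalues are independent,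
so the roots in the disk span a `p(λ)`-dimensional space of `ℓ²` solutions; the `q` remaining
equations `(A u)_i = λ u_i`, `i < q`, leave a nonzero solution in it when `p(λ) > q`. -/

open scoped ENNReal

noncomputable section

open Polynomial Module End Function fwdDiff

section Shift

variable {R : Type*} [CommRing R]

variable (R) in
def seqShift : End R (ℕ → R) := LinearMap.funLeft R R Nat.succ

lemma seqShift_pow_apply (k : ℕ) (u : ℕ → R) (j : ℕ) : (seqShift R ^ k) u j = u (j + k) := by
  induction k generalizing u with
  | zero => rfl
  | succ k ih => rw [pow_succ, mul_apply, ih]; rfl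

lemma aeval_seqShift_apply {P : R[X]} {N : ℕ} (hP : P.natDegree < N) (u : ℕ → R) (j : ℕ) :
    aeval (seqShift R) P u j = ∑ k ∈ Finset.range N, P.coeff k * u (j + k) := by
  simp [aeval_eq_sum_range' hP, LinearMap.sum_apply, seqShift_pow_apply]

lemma seqShift_sub_smul_mul_pow (μ : R) (u : ℕ → R) :
    (seqShift R - μ • 1) (fun j => u j * μ ^ j) = μ • fun j => Δ_[1] u j * μ ^ j := by
  ext j
  simp only [seqShift, LinearMap.sub_apply, LinearMap.smul_apply, End.one_apply, Pi.sub_apply,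
    LinearMap.funLeft_apply, Nat.succ_eq_add_one, pow_succ, Pi.smul_apply, smul_eq_mul, fwdDiff]
  ring

lemma seqShift_sub_smul_pow_mul_pow (μ : R) (k : ℕ) (u : ℕ → R) :
    ((seqShift R - μ • 1) ^ k) (fun j => u j * μ ^ j) =
      μ ^ k • fun j => (Δ_[1])^[k] u j * μ ^ j := by
  induction k with
  | zero => simp
  | succ k ih =>
    rw [pow_succ', mul_apply, ih, map_smul, seqShift_sub_smul_mul_pow, smul_smul, ← pow_succ,
      iterate_succ_apply']

lemma fwdDiff_iter_comp_natCast {G : Type*} [AddCommGroup G] (f : R → G) (k : ℕ) :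
    (Δ_[1])^[k] (f ∘ Nat.cast) = ((Δ_[1])^[k] f) ∘ Nat.cast := by
  induction k with
  | zero => rfl
  | succ k ih =>
    ext j
    simp [iterate_succ_apply', ih, fwdDiff]

lemma eval_mul_pow_mem_genEigenspace (μ : R) {P : R[X]} {k : ℕ} (hk : P.natDegree < k) :
    (fun j : ℕ => P.eval (j : R) * μ ^ j) ∈ (seqShift R).genEigenspace μ k := by
  rw [mem_genEigenspace_nat, LinearMap.mem_ker]
  have hΔ : (Δ_[1])^[k] (fun j : ℕ => P.eval (j : R)) = 0 := by
    rw [show (fun j : ℕ => P.eval (j : R)) = P.eval ∘ Nat.cast from rfl,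
      fwdDiff_iter_comp_natCast, fwdDiff_iter_eq_zero_of_degree_lt hk]
    rfl
  ext j
  simp [seqShift_sub_smul_pow_mul_pow, hΔ]

lemma Module.End.aeval_eq_zero_of_mem_genEigenspace {M : Type*} [AddCommGroup M] [Module R M]
    {f : End R M} {μ : R} {k : ℕ} {P : R[X]} (hP : (X - C μ) ^ k ∣ P) {x : M}
    (hx : x ∈ f.genEigenspace μ k) : aeval f P x = 0 := by
  obtain ⟨Q, rfl⟩ := hP
  rw [mem_genEigenspace_nat, LinearMap.mem_ker] at hx
  rw [mul_comm, aeval_mul, mul_apply, map_pow, map_sub, aeval_X, aeval_C,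
    Algebra.algebraMap_eq_smul_one, hx, map_zero]

end Shift

section Independence

variable {K : Type*} [Field K] [CharZero K]

lemma linearIndependent_natCast_pow_mul_pow {μ : K} (hμ : μ ≠ 0) :
    LinearIndependent K (fun t : ℕ => fun j : ℕ => (j : K) ^ t * μ ^ j) := by
  let f : K[X] →ₗ[K] (ℕ → K) :=
    { toFun := fun P j => P.eval (j : K) * μ ^ j
      map_add' := fun P Q => by ext; simp [add_mul]
      map_smul' := fun c P => by ext; simp [mul_assoc] }
  have hf : LinearMap.ker f = ⊥ := by
    refine LinearMap.ker_eq_bot'.mpr fun P hP => eq_zero_of_infinite_isRoot P ?_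
    refine Set.infinite_of_injective_forall_mem Nat.cast_injective fun j => ?_
    simpa [f, hμ] using congr_fun hP j
  have hfam : (fun t : ℕ => fun j : ℕ => (j : K) ^ t * μ ^ j) = f ∘ basisMonomials K := by
    funext t j
    simp [f, coe_basisMonomials]
  exact hfam ▸ (basisMonomials K).linearIndependent.map' f hf

theorem linearIndependent_natCast_pow_mul_pow_sigma {η : Type*} {ιs : η → Type*} {μ : η → K}
    (hμ : Injective μ) (hμ0 : ∀ i, μ i ≠ 0) {t : ∀ i, ιs i → ℕ} (ht : ∀ i, Injective (t i)) :
    LinearIndependent K (fun x : Σ i, ιs i => fun j : ℕ => (j : K) ^ t x.1 x.2 * μ x.1 ^ j) := by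
  have hspan : ∀ i, Submodule.span K (Set.range fun k (j : ℕ) => (j : K) ^ t i k * μ i ^ j) ≤
      (seqShift K).maxGenEigenspace (μ i) := by
    refine fun i => Submodule.span_le.mpr ?_
    rintro _ ⟨k, rfl⟩
    refine (seqShift K).genEigenspace_le_maximal (μ i) (t i k + 1) ?_
    have h := eval_mul_pow_mem_genEigenspace (μ i) (P := X ^ t i k) (k := t i k + 1) (by simp)
    simp only [eval_pow, eval_X] at h
    exact_mod_cast h
  refine linearIndependent_iUnion_finite
    (fun i => (linearIndependent_natCast_pow_mul_pow (hμ0 i)).comp (t i) (ht i))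
    fun i s _ hi => ?_
  exact (((seqShift K).independent_maxGenEigenspace.comp hμ).disjoint_biSup hi).mono (hspan i)
    (iSup₂_mono fun j _ => hspan j)

end Independence

namespace lp

variable {𝕜 α : Type*} {E : α → Type*} [∀ i, NormedAddCommGroup (E i)] {p : ℝ≥0∞}

variable (𝕜 E p) in
def coeFnₗ [NormedRing 𝕜] [∀ i, Module 𝕜 (E i)] [∀ i, IsBoundedSMul 𝕜 (E i)] :
    lp E p →ₗ[𝕜] ∀ i, E i :=
  LinearMap.pi (evalₗ E p)

lemma continuousLinearMap_eq_zero_of_single {F : Type*} [NormedRing 𝕜] [DecidableEq α]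
    [AddCommMonoid F] [Module 𝕜 F] [TopologicalSpace F] [T2Space F] [Fact (1 ≤ p)]
    (hp : p ≠ ⊤) {φ : lp (fun _ : α => 𝕜) p →L[𝕜] F} (h : ∀ j, φ (lp.single p j 1) = 0) :
    φ = 0 :=
  ext_continuousLinearMap hp fun j => ContinuousLinearMap.ext fun c => by
    simp only [ContinuousLinearMap.comp_apply, singleContinuousLinearMap_apply,
      ContinuousLinearMap.zero_comp, zero_apply]
    rw [← mul_one c, ← smul_eq_mul, lp.single_smul, map_smul, h j, smul_zero]

end lp

lemma memℓp_natCast_pow_mul_pow {z : ℂ} (hz : ‖z‖ < 1) (t : ℕ) :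
    Memℓp (fun j : ℕ => (j : ℂ) ^ t * z ^ j) 2 := by
  refine memℓp_gen ?_
  have heq : ∀ j : ℕ, ‖(j : ℂ) ^ t * z ^ j‖ ^ (2 : ℝ≥0∞).toReal
      = (j : ℝ) ^ (2 * t) * (‖z‖ ^ 2) ^ j := by
    intro j
    rw [ENNReal.toReal_ofNat, Real.rpow_two, norm_mul, norm_pow, norm_pow, Complex.norm_natCast]
    ring
  simp_rw [heq]
  refine summable_pow_mul_geometric_of_norm_lt_one _ ?_
  rw [norm_pow, norm_norm]
  exact pow_lt_one₀ (norm_nonneg z) hz two_ne_zero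

theorem Submodule.exists_ne_zero_forall_eq_zero_of_lt_finrank {K V : Type*} [Field K]
    [AddCommGroup V] [Module K V] (W : Submodule K V) [FiniteDimensional K W] {q : ℕ}
    (φ : Fin q → V →ₗ[K] K) (hq : q < finrank K W) : ∃ v ∈ W, v ≠ 0 ∧ ∀ i, φ i v = 0 := by
  have hker : LinearMap.ker ((LinearMap.pi φ).domRestrict W) ≠ ⊥ :=
    LinearMap.ker_ne_bot_of_finrank_lt (by rwa [finrank_fin_fun])
  obtain ⟨⟨v, hvW⟩, hv, hv0⟩ := Submodule.exists_mem_ne_zero_of_ne_bot hker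
  exact ⟨v, hvW, by simpa using hv0, fun i => congr_fun hv i⟩

theorem exists_finrank_eq_card_roots_norm_lt_one (P : ℂ[X]) (hP : P.eval 0 ≠ 0) :
    ∃ W : Submodule ℂ ell2, FiniteDimensional ℂ W ∧
      finrank ℂ W = Multiset.card (P.roots.filter fun z => ‖z‖ < 1) ∧
      ∀ v ∈ W, aeval (seqShift ℂ) P (lp.coeFnₗ ℂ _ 2 v) = 0 := by
  classical
  set R := P.roots.filter fun z => ‖z‖ < 1
  have hP0 : P ≠ 0 := by rintro rfl; simp at hP
  have hR : ∀ z ∈ R.toFinset, z ∈ P.roots ∧ ‖z‖ < 1 := fun z hz =>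
    Multiset.mem_filter.mp (Multiset.mem_toFinset.mp hz)
  let ι := Σ z : R.toFinset, Fin (R.count (z : ℂ))
  let w : ι → ell2 := fun x =>
    ⟨fun j => (j : ℂ) ^ (x.2 : ℕ) * (x.1 : ℂ) ^ j,
      memℓp_natCast_pow_mul_pow (hR _ x.1.2).2 _⟩
  have hR0 : ∀ z : R.toFinset, (z : ℂ) ≠ 0 := fun z hz =>
    hP (by simpa [hz] using isRoot_of_mem_roots (hR _ z.2).1)
  have hw : LinearIndependent ℂ w := by
    have hseq := linearIndependent_natCast_pow_mul_pow_sigma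
      (ιs := fun z : R.toFinset => Fin (R.count (z : ℂ))) Subtype.val_injective hR0
      (t := fun _ => Fin.val) fun _ => Fin.val_injective
    exact LinearIndependent.of_comp (lp.coeFnₗ ℂ _ 2) hseq
  refine ⟨Submodule.span ℂ (Set.range w), FiniteDimensional.span_of_finite ℂ (Set.finite_range w),
    ?_, fun v hv => ?_⟩
  · rw [finrank_span_eq_card hw, Fintype.card_sigma]
    simp only [Fintype.card_fin]
    rw [Finset.sum_coe_sort R.toFinset R.count, Multiset.toFinset_sum_count_eq]
  refine (Submodule.span_le
    (p := LinearMap.ker ((aeval (seqShift ℂ) P).comp (lp.coeFnₗ ℂ _ 2)))).mpr ?_ hv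
  rintro _ ⟨⟨z, t⟩, rfl⟩
  have hdvd : (X - C (z : ℂ)) ^ ((t : ℕ) + 1) ∣ P := by
    rw [← le_rootMultiplicity_iff hP0, ← count_roots]
    exact t.isLt.trans_le (Multiset.count_le_of_le _ (Multiset.filter_le _ _))
  have hmem := eval_mul_pow_mem_genEigenspace (z : ℂ) (P := X ^ (t : ℕ)) (k := t + 1) (by simp)
  simp only [eval_pow, eval_X] at hmem
  exact aeval_eq_zero_of_mem_genEigenspace hdvd hmem

lemma bpoly_coeff {m n : ℕ} (a : ℤ → ℂ) (lam : ℂ) {k : ℕ} (hk : k < m + n + 1) :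
    (bpoly m n a lam).coeff k = a (k - m) - if k = m then lam else 0 := by
  simp [bpoly, hk]

lemma natDegree_bpoly_lt (m n : ℕ) (a : ℤ → ℂ) (lam : ℂ) :
    (bpoly m n a lam).natDegree < m + n + 1 := by
  refine Nat.lt_succ_of_le ((natDegree_sub_le_of_le ?_ ?_).trans (max_le le_rfl le_rfl))
  · exact natDegree_sum_le_of_forall_le _ _ fun k hk =>
      (natDegree_C_mul_X_pow_le _ _).trans (Nat.lt_succ_iff.mp (Finset.mem_range.mp hk))
  · exact (natDegree_C_mul_X_pow_le _ _).trans (Nat.le_add_right _ _)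

lemma sum_toeplitz_row_eq {m n : ℕ} {a : ℤ → ℂ} (ha : ∀ k : ℤ, k < -(m : ℤ) → a k = 0)
    {lam : ℂ} {u : ℕ → ℂ} (hu : aeval (seqShift ℂ) (bpoly m n a lam) u = 0) {i : ℕ}
    (hi : m ≤ i) :
    ∑ j ∈ Finset.range (i + n + 1), a ((j : ℤ) - (i : ℤ)) * u j = lam * u i := by
  have hrow := congr_fun hu (i - m)
  rw [aeval_seqShift_apply (natDegree_bpoly_lt m n a lam), Pi.zero_apply] at hrow
  calc ∑ j ∈ Finset.range (i + n + 1), a ((j : ℤ) - (i : ℤ)) * u j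
      = ∑ k ∈ Finset.range (m + n + 1), a ((k : ℤ) - m) * u (i - m + k) := by
        rw [show i + n + 1 = i - m + (m + n + 1) by omega, Finset.sum_range_add,
          Finset.sum_eq_zero fun j hj => by
            rw [ha _ (by rw [Finset.mem_range] at hj; omega), zero_mul], zero_add]
        refine Finset.sum_congr rfl fun k _ => ?_
        congr 2
        push_cast [Nat.cast_sub hi]
        ring
    _ = lam * u i := by
        rw [Finset.sum_congr rfl fun k hk => by rw [bpoly_coeff a lam (Finset.mem_range.mp hk)]]
          at hrow
        simpa [sub_mul, Finset.sum_sub_distrib, ite_mul, Nat.sub_add_cancel hi, sub_eq_zero]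
          using hrow

theorem stmt_8_general (m n : ℕ) (hm : 1 ≤ m) (a : ℤ → ℂ)
    (ham : a (-(m : ℤ)) ≠ 0)
    (hsupp : ∀ k : ℤ, (k < -(m : ℤ) ∨ (n : ℤ) < k) → a k = 0)
    (k₁ k₂ : ℕ)
    (T E A : ell2 →L[ℂ] ell2)
    (hT : ∀ (v : ell2) (i : ℕ),
      (T v) i = ∑ j ∈ Finset.range (i + n + 1), a ((j : ℤ) - (i : ℤ)) * v j)
    (hE : ∀ i j : ℕ, (k₁ ≤ i ∨ k₂ ≤ j) → (E (lp.single 2 j 1)) i = 0)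
    (hA : A = T + E)
    (lam : ℂ)
    (hp : max m k₁ < rootCount m n a lam) :
    ∃ v : ell2, v ≠ 0 ∧ A v = lam • v := by
  have hb0 : (bpoly m n a lam).eval 0 ≠ 0 := by
    rwa [← coeff_zero_eq_eval_zero, bpoly_coeff a lam (by omega), if_neg (by omega), sub_zero,
      Nat.cast_zero, zero_sub]
  have hEtail : ∀ i, k₁ ≤ i → ∀ v, E v i = 0 := fun i hi v =>
    congr($(lp.continuousLinearMap_eq_zero_of_single (φ := (lp.evalCLM ℂ _ 2 i).comp E)
      ENNReal.ofNat_ne_top fun j => hE i j (Or.inl hi)) v)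
  obtain ⟨W, _, hWdim, hWsol⟩ := exists_finrank_eq_card_roots_norm_lt_one _ hb0
  obtain ⟨v, hvW, hv0, hvhead⟩ := W.exists_ne_zero_forall_eq_zero_of_lt_finrank
    (fun i : Fin (max m k₁) =>
      (lp.evalₗ _ 2 (i : ℕ)).comp (A - lam • 1 : ell2 →L[ℂ] ell2).toLinearMap) (hWdim ▸ hp)
  refine ⟨v, hv0, lp.ext (funext fun i => ?_)⟩
  rcases lt_or_ge i (max m k₁) with hi | hi
  · exact sub_eq_zero.mp (hvhead ⟨i, hi⟩)
  · rw [hA, add_apply, lp.coeFn_add, Pi.add_apply,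
      hEtail i (le_of_max_le_right hi), add_zero, hT, lp.coeFn_smul, Pi.smul_apply, smul_eq_mul]
    exact sum_toeplitz_row_eq (u := ⇑v) (fun k hk => hsupp k (Or.inl hk)) (hWsol v hvW)
      (le_of_max_le_left hi)

/-- with `q = max m k₁`, if `λ ∉ a(𝕋)` and `p(λ) > q`, then `λ` is an
eigenvalue of `A = T(a) + E`. -/
theorem stmt_8 (m n : ℕ) (hm : 1 ≤ m) (hn : 1 ≤ n) (a : ℤ → ℂ)
    (ham : a (-(m : ℤ)) ≠ 0) (han : a (n : ℤ) ≠ 0)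
    (hsupp : ∀ k : ℤ, (k < -(m : ℤ) ∨ (n : ℤ) < k) → a k = 0)
    (k₁ k₂ : ℕ) (hk₁ : 1 ≤ k₁) (hk₂ : 1 ≤ k₂)
    (T E A : ell2 →L[ℂ] ell2)
    (hT : ∀ (v : ell2) (i : ℕ),
      (T v) i = ∑ j ∈ Finset.range (i + n + 1), a ((j : ℤ) - (i : ℤ)) * v j)
    (hE : ∀ i j : ℕ, (k₁ ≤ i ∨ k₂ ≤ j) → (E (lp.single 2 j 1)) i = 0)
    (hA : A = T + E)
    (lam : ℂ) (hlam : lam ∉ aCircle m n a)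
    (hp : max m k₁ < rootCount m n a lam) :
    ∃ v : ell2, v ≠ 0 ∧ A v = lam • v :=
  stmt_8_general m n hm a ham hsupp k₁ k₂ T E A hT hE hA lam hp
end
end

section
/- Barnett factorization: let p ≥ 1, let s(z) = z^p + ∑_{j=0}^{p−1} s_j z^j be a monic complex polynomial with coefficients s_0, …, s_{p−1} and s_p = 1, and let F be its p×p companion matrix (ones on the superdiagonal, last row (−s_0, …, −s_{p−1})). Let 𝓛 be the p×p lower triangular Toeplitz matrix with first column (s_p, s_{p−1}, …, s_1)ᵀ and let 𝓤 be the p×p upper triangular Toeplitz matrix with first row (s_0, s_1, …, s_{p−1}). Then 𝓛 F^p = −𝓤; equivalently, since 𝓛 is invertible, F^p = −𝓛^{−1} 𝓤. -/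
set_option maxHeartbeats 1000000

noncomputable section

/-- Barnett factorization: for a monic polynomial
`s(z) = z^p + s_{p-1} z^{p-1} + … + s_0` (encoded by `s : ℕ → ℂ` with `s p = 1`) with
companion matrix `F`, lower triangular Toeplitz `𝓛` with first column `(s_p, …, s_1)ᵀ` and
upper triangular Toeplitz `𝓤` with first row `(s_0, …, s_{p-1})`, one has `𝓛 F^p = −𝓤`;
moreover `𝓛` is invertible and `F^p = −𝓛⁻¹ 𝓤`. -/
theorem stmt_11 (p : ℕ) (hp : 1 ≤ p) (s : ℕ → ℂ) (hsp : s p = 1)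
    (F : Matrix (Fin p) (Fin p) ℂ)
    (hF : ∀ i j : Fin p, F i j =
      if (j : ℕ) = (i : ℕ) + 1 then 1 else if (i : ℕ) = p - 1 then -(s j) else 0)
    (L U : Matrix (Fin p) (Fin p) ℂ)
    (hL : ∀ i j : Fin p, L i j =
      if (j : ℕ) ≤ (i : ℕ) then s (p - ((i : ℕ) - (j : ℕ))) else 0)
    (hU : ∀ i j : Fin p, U i j =
      if (i : ℕ) ≤ (j : ℕ) then s ((j : ℕ) - (i : ℕ)) else 0) :
    L * F ^ p = -U ∧ IsUnit L ∧ F ^ p = -(L⁻¹ * U) := by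
  set g : ℕ → Fin p → Fin p → ℂ := fun k i j =>
    (if k ≤ (j : ℕ) ∧ (j : ℕ) - k ≤ (i : ℕ) then s (p + (j : ℕ) - (k + (i : ℕ))) else 0) -
    (if p - k ≤ (i : ℕ) ∧ (i : ℕ) - (p - k) ≤ (j : ℕ) then s (p + (j : ℕ) - (k + (i : ℕ))) else 0)
    with hg
  have hgapp : ∀ (k : ℕ) (i j : Fin p), g k i j =
    (if k ≤ (j : ℕ) ∧ (j : ℕ) - k ≤ (i : ℕ) then s (p + (j : ℕ) - (k + (i : ℕ))) else 0) -
    (if p - k ≤ (i : ℕ) ∧ (i : ℕ) - (p - k) ≤ (j : ℕ) then s (p + (j : ℕ) - (k + (i : ℕ))) else 0) :=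
    fun k i j => rfl
  have key : ∀ k, k ≤ p → ∀ i j : Fin p, (L * F ^ k) i j = g k i j := by
    intro k hk
    induction k with
    | zero =>
      intro i j
      have hj := j.isLt
      rw [pow_zero, mul_one, hL i j, hgapp]
      by_cases h : (j : ℕ) ≤ (i : ℕ)
      · rw [if_pos h, if_pos ⟨Nat.zero_le _, by omega⟩, if_neg (by omega),
          show p + (j : ℕ) - (0 + (i : ℕ)) = p - ((i : ℕ) - (j : ℕ)) from by omega]
        ring
      · rw [if_neg h, if_neg (by omega), if_neg (by omega)]
        ring
    | succ k ih =>
      intro i j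
      have hk' : k ≤ p := Nat.le_of_succ_le hk
      have hkp : k < p := hk
      have hj := j.isLt
      have hi := i.isLt
      rw [pow_succ, ← mul_assoc, Matrix.mul_apply]
      have hrw : ∀ t : Fin p, (L * F ^ k) i t * F t j =
          (if (j : ℕ) = (t : ℕ) + 1 then g k i t else 0) +
          (if (t : ℕ) = p - 1 then g k i t * (-(s j)) else 0) := by
        intro t
        have ht := t.isLt
        rw [ih hk' i t, hF t j]
        by_cases h1 : (j : ℕ) = (t : ℕ) + 1
        · rw [if_pos h1, if_pos h1, if_neg (by omega)]
          ring
        · rw [if_neg h1, if_neg h1]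
          by_cases h2 : (t : ℕ) = p - 1
          · rw [if_pos h2, if_pos h2]; ring
          · rw [if_neg h2, if_neg h2]; ring
      rw [Finset.sum_congr rfl (fun t _ => hrw t), Finset.sum_add_distrib]
      set d : Fin p := ⟨p - 1, by omega⟩ with hdd
      have hdval : (d : ℕ) = p - 1 := rfl
      have hd : (∑ t : Fin p, if (t : ℕ) = p - 1 then g k i t * (-(s j)) else 0) =
          g k i d * (-(s j)) := by
        rw [Finset.sum_eq_single d]
        · rw [if_pos hdval]
        · intro t _ ht
          rw [if_neg]
          intro h
          exact ht (Fin.ext (by rw [h, hdval]))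
        · intro h; exact absurd (Finset.mem_univ _) h
      rw [hd]
      have hgd : g k i d = if (i : ℕ) = p - 1 - k then 1 else 0 := by
        rw [hgapp, hdval]
        by_cases h1 : (i : ℕ) = p - 1 - k
        · rw [if_pos h1, if_pos (by omega), if_neg (by omega),
            show p + (p - 1) - (k + (i : ℕ)) = p from by omega, hsp]
          ring
        · rw [if_neg h1]
          by_cases h2 : p - k ≤ (i : ℕ)
          · rw [if_pos ⟨by omega, by omega⟩, if_pos ⟨h2, by omega⟩]; ring
          · rw [if_neg (by omega), if_neg (by omega)]; ring
      rw [hgd, hgapp]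
      rcases Nat.lt_or_ge (j : ℕ) 1 with hj0 | hj1
      · -- j = 0
        have hc : (∑ t : Fin p, if (j : ℕ) = (t : ℕ) + 1 then g k i t else 0) = 0 :=
          Finset.sum_eq_zero (fun t _ => if_neg (by omega))
        rw [hc]
        by_cases hi' : (i : ℕ) = p - 1 - k
        · rw [if_pos hi', if_neg (by omega), if_pos ⟨by omega, by omega⟩,
            show p + (j : ℕ) - (k + 1 + (i : ℕ)) = (j : ℕ) from by omega]
          ring
        · rw [if_neg hi', if_neg (by omega), if_neg (by omega)]
          ring
      · -- j ≥ 1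
        set c : Fin p := ⟨(j : ℕ) - 1, by omega⟩ with hcc
        have hcval : (c : ℕ) = (j : ℕ) - 1 := rfl
        have hc : (∑ t : Fin p, if (j : ℕ) = (t : ℕ) + 1 then g k i t else 0) = g k i c := by
          rw [Finset.sum_eq_single c]
          · rw [if_pos (by rw [hcval]; omega)]
          · intro t _ ht
            rw [if_neg]
            intro h
            exact ht (Fin.ext (by rw [hcval]; omega))
          · intro h; exact absurd (Finset.mem_univ _) h
        rw [hc, hgapp, hcval]
        have e1 : p + ((j : ℕ) - 1) - (k + (i : ℕ)) = p + (j : ℕ) - (k + 1 + (i : ℕ)) := by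
          omega
        rw [e1]
        by_cases hi' : (i : ℕ) = p - 1 - k
        · rw [if_pos hi', if_pos (show p - (k + 1) ≤ (i : ℕ) ∧ (i : ℕ) - (p - (k + 1)) ≤ (j : ℕ)
              from ⟨by omega, by omega⟩),
            show p + (j : ℕ) - (k + 1 + (i : ℕ)) = (j : ℕ) from by omega,
            if_neg (show ¬(p - k ≤ (i : ℕ) ∧ (i : ℕ) - (p - k) ≤ (j : ℕ) - 1) from by omega)]
          by_cases hA : k + 1 ≤ (j : ℕ) ∧ (j : ℕ) - (k + 1) ≤ (i : ℕ)
          · rw [if_pos ⟨by omega, by omega⟩, if_pos hA]; ring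
          · rw [if_neg (by omega), if_neg hA]; ring
        · rw [if_neg hi']
          have hBiff : (p - k ≤ (i : ℕ) ∧ (i : ℕ) - (p - k) ≤ (j : ℕ) - 1) ↔
              (p - (k + 1) ≤ (i : ℕ) ∧ (i : ℕ) - (p - (k + 1)) ≤ (j : ℕ)) := by omega
          by_cases hA : k + 1 ≤ (j : ℕ) ∧ (j : ℕ) - (k + 1) ≤ (i : ℕ)
          · rw [if_pos ⟨by omega, by omega⟩, if_pos hA]
            by_cases hB : p - (k + 1) ≤ (i : ℕ) ∧ (i : ℕ) - (p - (k + 1)) ≤ (j : ℕ)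
            · rw [if_pos (hBiff.mpr hB), if_pos hB]; ring
            · rw [if_neg (fun h => hB (hBiff.mp h)), if_neg hB]; ring
          · rw [if_neg (by omega), if_neg hA]
            by_cases hB : p - (k + 1) ≤ (i : ℕ) ∧ (i : ℕ) - (p - (k + 1)) ≤ (j : ℕ)
            · rw [if_pos (hBiff.mpr hB), if_pos hB]; ring
            · rw [if_neg (fun h => hB (hBiff.mp h)), if_neg hB]; ring
  have h1 : L * F ^ p = -U := by
    ext i j
    have hj := j.isLt
    have hi := i.isLt
    rw [key p le_rfl i j, hgapp]
    simp only [Matrix.neg_apply]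
    rw [hU i j, if_neg (by omega)]
    by_cases h : (i : ℕ) ≤ (j : ℕ)
    · rw [if_pos ⟨by omega, by omega⟩, if_pos h,
        show p + (j : ℕ) - (p + (i : ℕ)) = (j : ℕ) - (i : ℕ) from by omega]
      ring
    · rw [if_neg (by omega), if_neg h]; ring
  have hdet : L.det = 1 := by
    rw [Matrix.det_of_lowerTriangular L (fun i j hij => by
      rw [hL, if_neg (by exact_mod_cast Nat.not_le.mpr hij)])]
    have hdiag : ∀ i : Fin p, L i i = 1 := by
      intro i
      rw [hL, if_pos le_rfl]
      simp [hsp]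
    simp [hdiag]
  have hunit : IsUnit L := (Matrix.isUnit_iff_isUnit_det L).mpr (by rw [hdet]; exact isUnit_one)
  refine ⟨h1, hunit, ?_⟩
  have hinv : L⁻¹ * L = 1 := Matrix.nonsing_inv_mul L (by rw [hdet]; exact isUnit_one)
  calc F ^ p = (L⁻¹ * L) * F ^ p := by rw [hinv, one_mul]
    _ = L⁻¹ * (L * F ^ p) := by rw [mul_assoc]
    _ = L⁻¹ * (-U) := by rw [h1]
    _ = -(L⁻¹ * U) := by rw [mul_neg]
end
end

section
/- Graeffe root-squaring step: let b ∈ ℂ[z] be a nonzero polynomial. Then there exists a unique polynomial b₁ ∈ ℂ[z] with b₁(z²) = b(z)·b(−z) for all z; it satisfies deg b₁ = deg b, the multiset of roots of b₁ is the image of the multiset of roots of b under the map z ↦ z², and the number of roots of b₁ of modulus less than 1, counted with multiplicity, equals the number of roots of b of modulus less than 1, counted with multiplicity. -/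
/-!
Split `b(z) = e(z²) + z·o(z²)` into even and odd parts (`e = contract 2 b`,
`o = contract 2 b.divX`). Then `b(z)·b(-z) = e(z²)² - z²·o(z²)²`, so `b₁ = e² - z·o²` (the Graeffe
transform) works, and it is unique because `q ↦ q(z²)` is injective. By uniqueness the transform is
multiplicative and sends `z - a` to `-(z - a²)`; factoring `b` into linear factors over `ℂ` then
shows that the roots of `b₁` are the squares of the roots of `b`, and `‖a²‖ < 1 ↔ ‖a‖ < 1`.
-/

open Polynomial

namespace Polynomial

section CommRing

variable {R : Type*} [CommRing R]

theorem expand_contract_add_X_mul_expand_contract_divX (p : R[X]) :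
    expand R 2 (contract 2 p) + X * expand R 2 (contract 2 p.divX) = p := by
  ext n
  rcases n with _ | n
  · simp [coeff_expand two_pos, coeff_contract two_ne_zero]
  rw [coeff_add, coeff_X_mul, coeff_expand two_pos, coeff_expand two_pos,
    coeff_contract two_ne_zero, coeff_contract two_ne_zero, coeff_divX]
  rcases n.even_or_odd' with ⟨k, rfl | rfl⟩
  · simp [mul_comm]
  · have h_even : 2 * k + 1 + 1 = (k + 1) * 2 := by ring
    have h_odd : ¬ 2 ∣ 2 * k + 1 := by omega
    simp only [h_even, h_odd, dvd_mul_left, if_true, if_false, Nat.mul_div_cancel _ two_pos,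
      add_zero]

theorem expand_two_comp_neg_X (q : R[X]) : (expand R 2 q).comp (-X) = expand R 2 q := by
  rw [expand_eq_comp_X_pow, comp_assoc, pow_comp, X_comp, neg_sq]

noncomputable def graeffe (p : R[X]) : R[X] := contract 2 p ^ 2 - X * contract 2 p.divX ^ 2

theorem expand_graeffe (p : R[X]) : expand R 2 (graeffe p) = p * p.comp (-X) := by
  set e := expand R 2 (contract 2 p)
  set o := expand R 2 (contract 2 p.divX)
  have he : e.comp (-X) = e := expand_two_comp_neg_X _
  have ho : o.comp (-X) = o := expand_two_comp_neg_X _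
  calc expand R 2 (graeffe p) = e ^ 2 - X ^ 2 * o ^ 2 := by
        rw [graeffe, map_sub, map_mul, map_pow, map_pow, expand_X]
    _ = (e + X * o) * (e + X * o).comp (-X) := by
        rw [add_comp, mul_comp, X_comp, he, ho]; ring
    _ = p * p.comp (-X) := by rw [expand_contract_add_X_mul_expand_contract_divX]

theorem graeffe_mul (p q : R[X]) : graeffe (p * q) = graeffe p * graeffe q :=
  expand_injective two_pos <| by
    rw [map_mul, expand_graeffe, expand_graeffe, expand_graeffe, mul_comp]; ring

theorem graeffe_C (a : R) : graeffe (C a) = C (a ^ 2) :=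
  expand_injective two_pos <| by rw [expand_graeffe, C_comp, expand_C, C_pow, sq]

theorem graeffe_zero : graeffe (0 : R[X]) = 0 := by
  simpa using graeffe_C (0 : R)

theorem graeffe_X_sub_C (a : R) : graeffe (X - C a) = -(X - C (a ^ 2)) :=
  expand_injective two_pos <| by
    rw [expand_graeffe, map_neg, map_sub, expand_X, expand_C, sub_comp, X_comp, C_comp, C_pow]
    ring

theorem graeffe_multiset_prod (m : Multiset R[X]) : graeffe m.prod = (m.map graeffe).prod := by
  induction m using Multiset.induction_on with
  | empty => simpa using graeffe_C (1 : R)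
  | cons p m ih => rw [Multiset.prod_cons, graeffe_mul, ih, Multiset.map_cons, Multiset.prod_cons]

end CommRing

section IsDomain

variable {R : Type*} [CommRing R] [IsDomain R]

theorem natDegree_graeffe (p : R[X]) : (graeffe p).natDegree = p.natDegree := by
  rcases eq_or_ne p 0 with rfl | hp
  · rw [graeffe_zero]
  have h := congrArg natDegree (expand_graeffe p)
  rw [natDegree_expand, natDegree_mul hp (comp_neg_X_eq_zero_iff.not.mpr hp), natDegree_comp,
    natDegree_neg, natDegree_X] at h
  omega

theorem roots_graeffe {p : R[X]} (hp : p.Splits) : (graeffe p).roots = p.roots.map (· ^ 2) := by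
  rcases eq_or_ne p 0 with rfl | hp0
  · rw [graeffe_zero, roots_zero, Multiset.map_zero]
  have hlc : p.leadingCoeff ^ 2 ≠ 0 := pow_ne_zero _ (leadingCoeff_ne_zero.mpr hp0)
  have hfactors : (0 : R[X]) ∉ p.roots.map fun a => -(X - C (a ^ 2)) := by
    simp only [Multiset.mem_map, not_exists, not_and]
    exact fun a _ h => X_sub_C_ne_zero _ (neg_eq_zero.mp h)
  conv_lhs => rw [hp.eq_prod_roots]
  rw [graeffe_mul, graeffe_C, graeffe_multiset_prod, Multiset.map_map, roots_C_mul _ hlc]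
  simp only [Function.comp_def, graeffe_X_sub_C]
  rw [roots_multiset_prod _ hfactors, Multiset.bind_map]
  simp only [roots_neg, roots_X_sub_C, Multiset.bind_singleton]

end IsDomain

end Polynomial

theorem Multiset.card_filter_norm_lt_one_map_pow {𝕜 : Type*} [NormedDivisionRing 𝕜]
    (s : Multiset 𝕜) {n : ℕ} (hn : n ≠ 0) :
    card ((s.map (· ^ n)).filter (‖·‖ < 1)) = card (s.filter (‖·‖ < 1)) := by
  rw [filter_map, card_map]
  congr 2
  ext z
  simp only [Function.comp, norm_pow]
  exact pow_lt_one_iff_of_nonneg (norm_nonneg z) hn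

theorem stmt_13_general (b : Polynomial ℂ) :
    ∃ b₁ : Polynomial ℂ,
      b₁.comp (X ^ 2) = b * b.comp (-X) ∧
      (∀ c : Polynomial ℂ, c.comp (X ^ 2) = b * b.comp (-X) → c = b₁) ∧
      b₁.natDegree = b.natDegree ∧
      b₁.roots = b.roots.map (fun z : ℂ => z ^ 2) ∧
      Multiset.card (b₁.roots.filter fun z => ‖z‖ < 1) =
        Multiset.card (b.roots.filter fun z => ‖z‖ < 1) := by
  have hroots := roots_graeffe (IsAlgClosed.splits b)
  refine ⟨graeffe b, expand_graeffe b,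
    fun c hc => expand_injective two_pos (hc.trans (expand_graeffe b).symm),
    natDegree_graeffe b, hroots, ?_⟩
  rw [hroots]
  exact b.roots.card_filter_norm_lt_one_map_pow two_ne_zero

/-- Graeffe root-squaring step: for a nonzero `b ∈ ℂ[z]` there is a unique
polynomial `b₁` with `b₁(z²) = b(z)·b(−z)`; it has the same degree as `b`, its multiset of
roots is the image of the roots of `b` under `z ↦ z²`, and it has the same number of roots
(with multiplicity) in the open unit disk as `b`. -/
theorem stmt_13 (b : Polynomial ℂ) (hb : b ≠ 0) :
    ∃ b₁ : Polynomial ℂ,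
      b₁.comp (X ^ 2) = b * b.comp (-X) ∧
      (∀ c : Polynomial ℂ, c.comp (X ^ 2) = b * b.comp (-X) → c = b₁) ∧
      b₁.natDegree = b.natDegree ∧
      b₁.roots = b.roots.map (fun z : ℂ => z ^ 2) ∧
      Multiset.card (b₁.roots.filter fun z => ‖z‖ < 1) =
        Multiset.card (b.roots.filter fun z => ‖z‖ < 1) :=
  stmt_13_general b
end

section
/- Termination of Graeffe's iteration: let b ∈ ℂ[z] be a polynomial of degree d ≥ 1 having exactly h roots of modulus strictly less than 1 and d − h roots of modulus strictly greater than 1 (no roots of modulus 1), all counted with multiplicity. Define the Graeffe sequence by b_0 = b and, for k ≥ 0, b_{k+1} the unique polynomial with b_{k+1}(z²) = b_k(z)·b_k(−z). Then there exists k ≥ 0 such that the coefficient of z^h in b_k has modulus strictly greater than the sum of the moduli of all the other coefficients of b_k. -/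
/-!
Up to a nonzero scalar, the `k`-th Graeffe iterate of `b` is `∏ (X - r ^ 2 ^ k)` over the roots
`r` of `b`. Writing each factor with `|r| > 1` as `-r ^ 2 ^ k * (1 - r⁻¹ ^ 2 ^ k * X)` and dropping
the scalars, the iterate becomes a polynomial whose coefficients converge to those of `X ^ h`,
since `r ^ 2 ^ k → 0` for `|r| < 1` and `r⁻¹ ^ 2 ^ k → 0` for `|r| > 1`. Eventually its coefficient
of `X ^ h` therefore dominates all the others, and dominance is invariant under nonzero scalars.
-/

open Filter Polynomial Topology

namespace Polynomial

section Graeffe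

variable {R : Type*} [CommRing R]

lemma prod_X_sub_C_mul_comp_neg_X (s : Multiset R) :
    (s.map (X - C ·)).prod * (s.map (X - C ·)).prod.comp (-X) =
      (-1) ^ Multiset.card s * ((s.map (· ^ 2)).map (X - C ·)).prod.comp (X ^ 2) := by
  induction s using Multiset.induction_on with
  | empty => simp
  | cons a s ih =>
    simp only [Multiset.map_cons, Multiset.prod_cons, Multiset.card_cons, mul_comp, sub_comp,
      X_comp, C_comp]
    rw [pow_succ, C_pow]
    linear_combination (X - C a) * (-X - C a) * ih

lemma eq_C_mul_prod_sq_of_comp_X_sq_eq {p q : R[X]} {γ : R} {s : Multiset R}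
    (hp : p = C γ * (s.map (X - C ·)).prod) (hq : q.comp (X ^ 2) = p * p.comp (-X)) :
    q = C ((-1) ^ Multiset.card s * γ ^ 2) * ((s.map (· ^ 2)).map (X - C ·)).prod := by
  apply expand_injective two_pos
  simp only [expand_eq_comp_X_pow, hq, hp, mul_comp, C_comp, map_mul, map_pow, map_neg, map_one]
  linear_combination C γ ^ 2 * prod_X_sub_C_mul_comp_neg_X s

lemma exists_eq_C_mul_prod_X_sub_C_pow_two_pow [IsDomain R] {seq : ℕ → R[X]} {γ : R}
    {s : Multiset R} (hγ : γ ≠ 0) (h0 : seq 0 = C γ * (s.map (X - C ·)).prod)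
    (hseq : ∀ k, (seq (k + 1)).comp (X ^ 2) = seq k * (seq k).comp (-X)) (k : ℕ) :
    ∃ c ≠ 0, seq k = C c * (s.map fun r => X - C (r ^ 2 ^ k)).prod := by
  induction k with
  | zero => exact ⟨γ, hγ, by simpa using h0⟩
  | succ k ih =>
    obtain ⟨c, hc, hk⟩ := ih
    have hk' : seq k = C c * ((s.map (· ^ 2 ^ k)).map (X - C ·)).prod := by
      rw [hk, Multiset.map_map]; rfl
    refine ⟨(-1) ^ Multiset.card s * c ^ 2, by simp [hc],
      (eq_C_mul_prod_sq_of_comp_X_sq_eq hk' (hseq k)).trans ?_⟩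
    simp only [Multiset.card_map, Multiset.map_map, Function.comp_def, ← pow_mul, ← pow_succ]

end Graeffe

lemma X_sub_C_eq_C_neg_mul_one_sub_C_inv_mul_X {K : Type*} [Field K] {c : K} (hc : c ≠ 0) :
    X - C c = C (-c) * (1 - C c⁻¹ * X) := by
  rw [mul_sub, mul_one, ← mul_assoc, ← C_mul, neg_mul, mul_inv_cancel₀ hc]
  simp only [map_neg, map_one]
  ring

lemma prod_X_sub_C_pow_add_eq_C_mul {K : Type*} [Field K] (S L : Multiset K)
    (hL : ∀ r ∈ L, r ≠ 0) (n : ℕ) :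
    ((S + L).map fun r => X - C (r ^ 2 ^ n)).prod = C (L.map fun r => -r ^ 2 ^ n).prod *
      ((S.map fun r => X - C (r ^ 2 ^ n)).prod *
        (L.map fun r => 1 - C (r⁻¹ ^ 2 ^ n) * X).prod) := by
  have hfactor : (L.map fun r => X - C (r ^ 2 ^ n)) =
      L.map fun r => C (-r ^ 2 ^ n) * (1 - C (r⁻¹ ^ 2 ^ n) * X) :=
    Multiset.map_congr rfl fun r hr => by
      rw [inv_pow]; exact X_sub_C_eq_C_neg_mul_one_sub_C_inv_mul_X (pow_ne_zero _ (hL r hr))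
  rw [Multiset.map_add, Multiset.prod_add, hfactor, Multiset.prod_map_mul, map_multiset_prod,
    Multiset.map_map]
  simp only [Function.comp_def]
  ring

lemma sum_norm_coeff_erase_C_mul_lt {K : Type*} [NormedDivisionRing K] {p : K[X]} {c : K}
    (hc : c ≠ 0) {s : Finset ℕ} {h : ℕ} (hp : ∑ i ∈ s.erase h, ‖p.coeff i‖ < ‖p.coeff h‖) :
    ∑ i ∈ s.erase h, ‖(C c * p).coeff i‖ < ‖(C c * p).coeff h‖ := by
  simp only [coeff_C_mul, norm_mul, ← Finset.mul_sum]
  exact mul_lt_mul_of_pos_left hp (norm_pos_iff.2 hc)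

end Polynomial

section CoeffwiseLimits

variable {ι : Type*} {l : Filter ι}

lemma Filter.Tendsto.coeff_mul {R : Type*} [Semiring R] [TopologicalSpace R]
    [IsTopologicalSemiring R] {p q : ι → R[X]} {p₀ q₀ : R[X]}
    (hp : Tendsto (fun n => (p n).coeff) l (𝓝 p₀.coeff))
    (hq : Tendsto (fun n => (q n).coeff) l (𝓝 q₀.coeff)) :
    Tendsto (fun n => (p n * q n).coeff) l (𝓝 (p₀ * q₀).coeff) := by
  refine tendsto_pi_nhds.2 fun i => ?_
  simp only [Polynomial.coeff_mul]
  exact tendsto_finsetSum _ fun x _ =>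
    (tendsto_pi_nhds.1 hp x.1).mul (tendsto_pi_nhds.1 hq x.2)

lemma Filter.Tendsto.coeff_multiset_prod {R α : Type*} [CommSemiring R] [TopologicalSpace R]
    [IsTopologicalSemiring R] (s : Multiset α) {F : ι → α → R[X]} {G : α → R[X]}
    (h : ∀ a ∈ s, Tendsto (fun n => (F n a).coeff) l (𝓝 (G a).coeff)) :
    Tendsto (fun n => (s.map (F n)).prod.coeff) l (𝓝 (s.map G).prod.coeff) := by
  induction s using Multiset.induction_on with
  | empty => simpa using tendsto_const_nhds
  | cons a s ih =>
    simp only [Multiset.map_cons, Multiset.prod_cons]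
    exact (h a (Multiset.mem_cons_self a s)).coeff_mul
      (ih fun b hb => h b (Multiset.mem_cons_of_mem hb))

variable {R : Type*} [Ring R] [TopologicalSpace R] [IsTopologicalRing R] {a : ι → R} {a₀ : R}

lemma Filter.Tendsto.coeff_X_sub_C (ha : Tendsto a l (𝓝 a₀)) :
    Tendsto (fun n => (X - C (a n)).coeff) l (𝓝 (X - C a₀).coeff) := by
  refine tendsto_pi_nhds.2 fun i => ?_
  simp only [coeff_sub, coeff_C]
  split_ifs
  · exact tendsto_const_nhds.sub ha
  · exact tendsto_const_nhds

lemma Filter.Tendsto.coeff_one_sub_C_mul_X (ha : Tendsto a l (𝓝 a₀)) :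
    Tendsto (fun n => (1 - C (a n) * X).coeff) l (𝓝 (1 - C a₀ * X).coeff) := by
  refine tendsto_pi_nhds.2 fun i => ?_
  simp only [coeff_sub, coeff_C_mul_X]
  split_ifs
  · exact tendsto_const_nhds.sub ha
  · exact tendsto_const_nhds

end CoeffwiseLimits

lemma Filter.Tendsto.eventually_sum_norm_coeff_erase_lt {R ι : Type*} [NormedRing R]
    [Nontrivial R] {l : Filter ι} {p : ι → R[X]} {h : ℕ}
    (hp : Tendsto (fun n => (p n).coeff) l (𝓝 (X ^ h : R[X]).coeff)) (s : Finset ℕ) :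
    ∀ᶠ n in l, ∑ i ∈ s.erase h, ‖(p n).coeff i‖ < ‖(p n).coeff h‖ := by
  have hsum : Tendsto (fun n => ∑ i ∈ s.erase h, ‖(p n).coeff i‖) l (𝓝 0) := by
    rw [← Finset.sum_const_zero (s := s.erase h)]
    refine tendsto_finsetSum _ fun i hi => ?_
    simpa [coeff_X_pow, Finset.ne_of_mem_erase hi] using (tendsto_pi_nhds.1 hp i).norm
  have hmain : Tendsto (fun n => ‖(p n).coeff h‖) l (𝓝 ‖(1 : R)‖) := by
    simpa using (tendsto_pi_nhds.1 hp h).norm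
  exact hsum.eventually_lt hmain (norm_pos_iff.2 one_ne_zero)

section NormedField

variable {K : Type*} [NormedField K]

lemma tendsto_pow_two_pow_nhds_zero {x : K} (hx : ‖x‖ < 1) :
    Tendsto (fun n => x ^ 2 ^ n) atTop (𝓝 0) :=
  (tendsto_pow_atTop_nhds_zero_of_norm_lt_one hx).comp
    (tendsto_pow_atTop_atTop_of_one_lt one_lt_two)

lemma tendsto_coeff_prod_X_sub_C_mul_prod_one_sub_C_mul_X (S L : Multiset K)
    (hS : ∀ r ∈ S, ‖r‖ < 1) (hL : ∀ r ∈ L, 1 < ‖r‖) :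
    Tendsto (fun n => ((S.map fun r => X - C (r ^ 2 ^ n)).prod *
      (L.map fun r => 1 - C (r⁻¹ ^ 2 ^ n) * X).prod).coeff) atTop
      (𝓝 (X ^ Multiset.card S : K[X]).coeff) := by
  have hlim : (X ^ Multiset.card S : K[X]) =
      (S.map fun _ => X - C 0).prod * (L.map fun _ => 1 - C 0 * X).prod := by
    simp
  rw [hlim]
  refine (Tendsto.coeff_multiset_prod S fun r hr => ?_).coeff_mul
    (Tendsto.coeff_multiset_prod L fun r hr => ?_)
  · exact (tendsto_pow_two_pow_nhds_zero (hS r hr)).coeff_X_sub_C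
  · refine (tendsto_pow_two_pow_nhds_zero ?_).coeff_one_sub_C_mul_X
    rw [norm_inv]
    exact inv_lt_one_of_one_lt₀ (hL r hr)

end NormedField

theorem stmt_14_general (b : Polynomial ℂ) (d h : ℕ)
    (hb : b ≠ 0)
    (hlt : Multiset.card (b.roots.filter fun z => ‖z‖ < 1) = h)
    (hone : ∀ z ∈ b.roots, ‖z‖ ≠ 1)
    (seq : ℕ → Polynomial ℂ) (hseq0 : seq 0 = b)
    (hseq : ∀ k : ℕ, (seq (k + 1)).comp (X ^ 2) = seq k * (seq k).comp (-X)) :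
    ∃ k : ℕ, (∑ i ∈ (Finset.range (d + 1)).erase h, ‖(seq k).coeff i‖) <
      ‖(seq k).coeff h‖ := by
  set S := b.roots.filter fun z => ‖z‖ < 1
  set L := b.roots.filter fun z => ¬‖z‖ < 1
  have hS : ∀ z ∈ S, ‖z‖ < 1 := fun z hz => (Multiset.mem_filter.1 hz).2
  have hL : ∀ z ∈ L, 1 < ‖z‖ := fun z hz =>
    (not_lt.1 (Multiset.mem_filter.1 hz).2).lt_of_ne' (hone z (Multiset.mem_of_mem_filter hz))
  have hb_split : seq 0 = C b.leadingCoeff * (b.roots.map (X - C ·)).prod := by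
    rw [hseq0, C_leadingCoeff_mul_prod_multiset_X_sub_C IsAlgClosed.card_roots_eq_natDegree]
  have hL0 : ∀ z ∈ L, z ≠ 0 := fun z hz => norm_pos_iff.1 (one_pos.trans (hL z hz))
  obtain ⟨n, hn⟩ := ((tendsto_coeff_prod_X_sub_C_mul_prod_one_sub_C_mul_X S L hS hL)
    |>.eventually_sum_norm_coeff_erase_lt (Finset.range (d + 1))).exists
  obtain ⟨c, hc, hseqn⟩ :=
    exists_eq_C_mul_prod_X_sub_C_pow_two_pow (leadingCoeff_ne_zero.2 hb) hb_split hseq n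
  rw [← Multiset.filter_add_not (fun z => ‖z‖ < 1) b.roots, prod_X_sub_C_pow_add_eq_C_mul S L hL0 n,
    ← mul_assoc, ← C_mul] at hseqn
  have hc' : c * (L.map fun r => -r ^ 2 ^ n).prod ≠ 0 :=
    mul_ne_zero hc (Multiset.prod_ne_zero (by simpa using fun h0 => hL0 0 h0 rfl))
  exact ⟨n, hseqn ▸ sum_norm_coeff_erase_C_mul_lt hc' (hlt ▸ hn)⟩

/-- termination of Graeffe's iteration: if `b` has degree `d ≥ 1`, `h` roots
of modulus `< 1` and `d − h` roots of modulus `> 1` (none of modulus 1), then along the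
Graeffe sequence `b₀ = b`, `b_{k+1}(z²) = b_k(z) b_k(−z)` there is a `k` at which the
coefficient of `z^h` dominates the sum of the moduli of all the other coefficients. -/
theorem stmt_14 (b : Polynomial ℂ) (d h : ℕ) (hd : 1 ≤ d) (hh : h ≤ d)
    (hb : b ≠ 0) (hdeg : b.natDegree = d)
    (hlt : Multiset.card (b.roots.filter fun z => ‖z‖ < 1) = h)
    (hgt : Multiset.card (b.roots.filter fun z => 1 < ‖z‖) = d - h)
    (hone : ∀ z ∈ b.roots, ‖z‖ ≠ 1)
    (seq : ℕ → Polynomial ℂ) (hseq0 : seq 0 = b)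
    (hseq : ∀ k : ℕ, (seq (k + 1)).comp (X ^ 2) = seq k * (seq k).comp (-X)) :
    ∃ k : ℕ, (∑ i ∈ (Finset.range (d + 1)).erase h, ‖(seq k).coeff i‖) <
      ‖(seq k).coeff h‖ :=
  stmt_14_general b d h hb hlt hone seq hseq0 hseq
end

section
/- The root-counting function λ ↦ p(λ) is locally constant on the open set ℂ ∖ a(𝕋): for every λ₀ ∉ a(𝕋) there is an open neighborhood of λ₀ on which p(λ) = p(λ₀). In particular, p is constant on each connected component of ℂ ∖ a(𝕋). -/
open scoped ENNReal

noncomputable section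

/-!
The argument principle: when `b_λ` has no zero on the unit circle, `p(λ)` equals
`(2πi)⁻¹ ∮_{|z|=1} b_λ'(z) / b_λ(z) dz`. On the circle `b_λ(z) = z^m (a(z) - λ)`, so for
`λ ∉ a(𝕋)` the integrand is jointly continuous in `λ` and `z`, and the integral depends
continuously on `λ` on the open set `ℂ ∖ a(𝕋)`. A continuous integer-valued function is locally
constant, hence constant on connected sets.
-/

open Metric Complex Real Polynomial Function

namespace circleIntegral

theorem integral_sub_inv_of_notMem_sphere {c w : ℂ} {R : ℝ} (hR : 0 < R) (hw : w ∉ sphere c R) :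
    (∮ z in C(c, R), (z - w)⁻¹) = if ‖w - c‖ < R then 2 * π * I else 0 := by
  split_ifs with hball
  · exact integral_sub_inv_of_mem_ball (mem_ball_iff_norm.mpr hball)
  · have hwc : w ∉ closedBall c R := fun h =>
      (mem_closedBall_iff_norm.mp h).lt_or_eq.elim hball fun h' => hw (mem_sphere_iff_norm.mpr h')
    refine DiffContOnCl.circleIntegral_eq_zero hR.le ?_
    refine DifferentiableOn.diffContOnCl_ball (U := {w}ᶜ) ?_ fun z hz hzw => hwc (hzw ▸ hz)
    exact ((differentiableOn_id.sub_const w).inv fun z hz => sub_ne_zero.mpr hz)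

theorem integral_multiset_sum_sub_inv {c : ℂ} {R : ℝ} (hR : 0 < R) (s : Multiset ℂ)
    (hs : ∀ w ∈ s, w ∉ sphere c R) :
    (∮ z in C(c, R), (s.map fun w => (z - w)⁻¹).sum) =
      2 * π * I * (s.filter fun w => ‖w - c‖ < R).card := by
  induction s using Multiset.induction_on with
  | empty => simp [circleIntegral]
  | cons w s ih =>
    have hw := hs w (Multiset.mem_cons_self w s)
    have hs' := fun v hv => hs v (Multiset.mem_cons_of_mem hv)
    have hrest : CircleIntegrable (fun z => (s.map fun w => (z - w)⁻¹).sum) c R :=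
      ContinuousOn.circleIntegrable hR.le <| continuousOn_multiset_sum _ fun v hv =>
        (continuousOn_id.sub continuousOn_const).inv₀ fun z hz =>
          sub_ne_zero.mpr fun h => hs' v hv (by simpa [← h] using hz)
    simp only [Multiset.map_cons, Multiset.sum_cons]
    rw [integral_add (circleIntegrable_sub_inv_iff.mpr (Or.inr (by rwa [abs_of_pos hR]))) hrest,
      integral_sub_inv_of_notMem_sphere hR hw, ih hs']
    by_cases hwc : ‖w - c‖ < R
    · rw [if_pos hwc, Multiset.filter_cons_of_pos s hwc, Multiset.card_cons, Nat.cast_succ]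
      ring
    · rw [if_neg hwc, Multiset.filter_cons_of_neg s hwc, zero_add]

end circleIntegral

theorem Polynomial.circleIntegral_derivative_div_self {c : ℂ} {R : ℝ} (hR : 0 < R) (p : ℂ[X])
    (hp : ∀ z ∈ sphere c R, p.eval z ≠ 0) :
    (∮ z in C(c, R), p.derivative.eval z / p.eval z) =
      2 * π * I * (p.roots.filter fun w => ‖w - c‖ < R).card := by
  have hsplit := IsAlgClosed.splits p
  rw [circleIntegral.integral_congr (g := fun z => (p.roots.map fun w => (z - w)⁻¹).sum) hR.le
    fun z hz => by simp only [hsplit.eval_derivative_div_eval_of_ne_zero (hp z hz), one_div]]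
  refine circleIntegral.integral_multiset_sum_sub_inv hR _ fun w hw hws => ?_
  exact hp w hws (isRoot_of_mem_roots hw)

theorem ContinuousOn.circleIntegral_of_uncurry {X E : Type*} [TopologicalSpace X]
    [NormedAddCommGroup E] [NormedSpace ℂ E] {f : X → ℂ → E} {U : Set X} {c : ℂ} {R : ℝ}
    (hR : 0 ≤ R) (hf : ContinuousOn (uncurry f) (U ×ˢ sphere c R)) :
    ContinuousOn (fun x => ∮ z in C(c, R), f x z) U := by
  rw [continuousOn_iff_continuous_domRestrict]
  refine intervalIntegral.continuous_parametric_intervalIntegral_of_continuous'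
    (f := fun (x : U) θ => deriv (circleMap c R) θ • f x (circleMap c R θ)) ?_ 0 (2 * π)
  simp only [deriv_circleMap]
  refine Continuous.smul (by fun_prop) ?_
  exact hf.comp_continuous (f := fun p : U × ℝ => (p.1.1, circleMap c R p.2)) (by fun_prop)
    fun p => ⟨p.1.2, circleMap_mem_sphere c hR p.2⟩

theorem ContinuousOn.of_natCast_complex {X : Type*} [TopologicalSpace X] {g : X → ℕ} {s : Set X}
    (hg : ContinuousOn (fun x => (g x : ℂ)) s) : ContinuousOn g s := by
  rw [Nat.isClosedEmbedding_coe_real.isInducing.continuousOn_iff]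
  exact Complex.continuous_re.comp_continuousOn hg

section RootCount

variable (m n : ℕ) (a : ℤ → ℂ)

theorem bpoly_eq_sub (lam : ℂ) : bpoly m n a lam = bpoly m n a 0 - C lam * X ^ m := by
  simp [bpoly]

theorem eval_bpoly_of_ne_zero (lam : ℂ) {z : ℂ} (hz : z ≠ 0) :
    (bpoly m n a lam).eval z = z ^ m * (aval m n a z - lam) := by
  rw [bpoly, eval_sub, eval_finsetSum, mul_sub, aval, Finset.mul_sum]
  simp only [eval_mul, eval_C, eval_pow, eval_X]
  congr 1
  · refine Finset.sum_nbij' (fun k => (k : ℤ) - m) (fun k => (k + m).toNat) ?_ ?_ ?_ ?_ ?_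
      <;> intro k hk <;> simp only [Finset.mem_range, Finset.mem_Icc] at hk ⊢
    · omega
    · omega
    · omega
    · omega
    · rw [← zpow_natCast, zpow_sub₀ hz, zpow_natCast, zpow_natCast]
      field_simp
  · ring

theorem eval_bpoly_ne_zero {lam : ℂ} (hlam : lam ∉ aCircle m n a) {z : ℂ} (hz : ‖z‖ = 1) :
    (bpoly m n a lam).eval z ≠ 0 := by
  have hz0 : z ≠ 0 := norm_ne_zero_iff.mp (hz ▸ one_ne_zero)
  rw [eval_bpoly_of_ne_zero m n a lam hz0]
  exact mul_ne_zero (pow_ne_zero m hz0) (sub_ne_zero.mpr fun h => hlam ⟨z, hz, h⟩)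

theorem isClosed_aCircle : IsClosed (aCircle m n a) := by
  have himage : aCircle m n a = aval m n a '' sphere 0 1 := by
    ext w; simp [aCircle]
  rw [himage]
  refine ((isCompact_sphere 0 1).image_of_continuousOn ?_).isClosed
  refine continuousOn_finsetSum _ fun k _ => continuousOn_const.mul ?_
  exact continuousOn_id.zpow₀ k fun z hz => Or.inl (ne_zero_of_mem_unit_sphere ⟨z, hz⟩)

theorem continuous_eval_bpoly :
    Continuous fun p : ℂ × ℂ => (bpoly m n a p.1).eval p.2 := by
  refine Continuous.congr (f := fun p => (bpoly m n a 0).eval p.2 - p.1 * p.2 ^ m)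
    (by fun_prop) fun p => ?_
  simp [bpoly_eq_sub m n a p.1]

theorem continuous_eval_derivative_bpoly :
    Continuous fun p : ℂ × ℂ => (bpoly m n a p.1).derivative.eval p.2 := by
  refine Continuous.congr
    (f := fun p => (bpoly m n a 0).derivative.eval p.2 - p.1 * (derivative (X ^ m)).eval p.2)
    (by fun_prop) fun p => ?_
  simp only [bpoly_eq_sub m n a p.1, derivative_sub, derivative_C_mul, eval_sub, eval_mul, eval_C]

theorem rootCount_eq_circleIntegral {lam : ℂ} (hlam : lam ∉ aCircle m n a) :
    (rootCount m n a lam : ℂ) = (2 * π * I)⁻¹ *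
      ∮ z in C(0, 1), (bpoly m n a lam).derivative.eval z / (bpoly m n a lam).eval z := by
  rw [(bpoly m n a lam).circleIntegral_derivative_div_self one_pos fun z hz =>
    eval_bpoly_ne_zero m n a hlam (by simpa using hz)]
  simp only [sub_zero, rootCount]
  field_simp

theorem continuousOn_rootCount : ContinuousOn (rootCount m n a) (aCircle m n a)ᶜ := by
  refine ContinuousOn.of_natCast_complex (ContinuousOn.congr ?_ fun lam hlam =>
    rootCount_eq_circleIntegral m n a hlam)
  refine continuousOn_const.mul (ContinuousOn.circleIntegral_of_uncurry zero_le_one ?_)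
  refine (continuous_eval_derivative_bpoly m n a).continuousOn.div
    (continuous_eval_bpoly m n a).continuousOn fun p hp => ?_
  exact eval_bpoly_ne_zero m n a hp.1 (by simpa using hp.2)

end RootCount

theorem stmt_16_general (m n : ℕ) (a : ℤ → ℂ) :
    (∀ lam0 : ℂ, lam0 ∉ aCircle m n a → ∃ U : Set ℂ, IsOpen U ∧ lam0 ∈ U ∧
      ∀ lam ∈ U, rootCount m n a lam = rootCount m n a lam0) ∧
    (∀ lam0 : ℂ, lam0 ∉ aCircle m n a →
      ∀ lam ∈ connectedComponentIn (aCircle m n a)ᶜ lam0,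
        rootCount m n a lam = rootCount m n a lam0) := by
  have hcont := continuousOn_rootCount m n a
  refine ⟨fun lam0 hlam0 => ?_, fun lam0 hlam0 lam hlam => ?_⟩
  · refine ⟨(aCircle m n a)ᶜ ∩ rootCount m n a ⁻¹' {rootCount m n a lam0},
      hcont.isOpen_inter_preimage (isClosed_aCircle m n a).isOpen_compl (isOpen_discrete _),
      ⟨hlam0, rfl⟩, fun lam hlam => hlam.2⟩
  · exact isPreconnected_connectedComponentIn.constant
      (hcont.mono (connectedComponentIn_subset _ _)) hlam (mem_connectedComponentIn hlam0)

/-- the root-counting function `λ ↦ p(λ)` is locally constant on the open set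
`ℂ ∖ a(𝕋)`; in particular it is constant on each connected component of `ℂ ∖ a(𝕋)`. -/
theorem stmt_16 (m n : ℕ) (hm : 1 ≤ m) (hn : 1 ≤ n) (a : ℤ → ℂ)
    (ham : a (-(m : ℤ)) ≠ 0) (han : a (n : ℤ) ≠ 0)
    (hsupp : ∀ k : ℤ, (k < -(m : ℤ) ∨ (n : ℤ) < k) → a k = 0) :
    (∀ lam0 : ℂ, lam0 ∉ aCircle m n a → ∃ U : Set ℂ, IsOpen U ∧ lam0 ∈ U ∧
      ∀ lam ∈ U, rootCount m n a lam = rootCount m n a lam0) ∧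
    (∀ lam0 : ℂ, lam0 ∉ aCircle m n a →
      ∀ lam ∈ connectedComponentIn (aCircle m n a)ᶜ lam0,
        rootCount m n a lam = rootCount m n a lam0) :=
  stmt_16_general m n a
end
end

section
/- Finite-section identity with rank-one correction: let (λ, v) be an eigenpair of A, i.e. v ∈ ℓ², v ≠ 0, Av = λv, and let N > max(m, n, k₁, k₂). Let v_N = (v_1, …, v_N)ᵀ ∈ ℂ^N (assume v_N ≠ 0), w_N = (v_{N+1}, …, v_{N+n})ᵀ ∈ ℂ^n, let Y be the n×n lower triangular Toeplitz matrix with entries Y_{ℓ,t} = a_{n−ℓ+t} for t ≤ ℓ and 0 otherwise (first column (a_n, a_{n−1}, …, a_1)ᵀ), and let u_N ∈ ℂ^N have its first N−n entries equal to 0 and last n entries equal to Y w_N. Let A_N be the N×N leading principal submatrix of A, with entries (A_N)_{i,j} = a_{j−i} + e_{i,j}. Then A_N v_N + u_N = λ v_N; moreover, the rank-one matrix C_N = (1/(v_N^* v_N)) u_N v_N^* satisfies (A_N + C_N) v_N = λ v_N and ‖C_N‖₂ ≤ ‖Y‖₂ ‖w_N‖₂ / ‖v_N‖₂. -/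
open scoped ENNReal

noncomputable section

/-!
Since `a_k = 0` for `k > n` and the columns of `E` beyond `k₂ < N` vanish, row `i < N` of
`A v = λ v` only involves `v_0, …, v_{N+n-1}`. Splitting that row at column `N`, the first part
is `(A_N v_N)_i` and the remainder `∑_t a_{N+t-i} v_{N+t}` vanishes for `i < N - n` and is the
corresponding entry of `Y w_N` otherwise, i.e. it is `(u_N)_i`. The matrix `C_N` is the rank-one
operator `x ↦ ⟪v_N, x⟫ u_N / ‖v_N‖²`, so `C_N v_N = u_N` and
`‖C_N‖ = ‖u_N‖ / ‖v_N‖ = ‖Y w_N‖ / ‖v_N‖`.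
-/

open Finset Matrix InnerProductSpace WithLp

section

variable {𝕜 ι : Type*} [RCLike 𝕜] [Fintype ι]

theorem Matrix.toEuclideanCLM_vecMulVec [DecidableEq ι] (u v : ι → 𝕜) :
    toEuclideanCLM (𝕜 := 𝕜) (vecMulVec u (star v)) = rankOne 𝕜 (toLp 2 u) (toLp 2 v) := by
  apply ContinuousLinearMap.coe_injective
  rw [coe_toEuclideanCLM_eq_toEuclideanLin, ← symm_toEuclideanLin_rankOne]
  simp

theorem Matrix.star_dotProduct_self_eq_norm_sq (v : ι → 𝕜) :
    star v ⬝ᵥ v = (‖toLp 2 v‖ : 𝕜) ^ 2 := by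
  rw [← inner_self_eq_norm_sq_to_K, EuclideanSpace.inner_eq_star_dotProduct, dotProduct_comm]

theorem Matrix.norm_toEuclideanCLM_normalized_vecMulVec [DecidableEq ι] (u v : ι → 𝕜) :
    ‖toEuclideanCLM (𝕜 := 𝕜) ((star v ⬝ᵥ v)⁻¹ • vecMulVec u (star v))‖ =
      ‖toLp 2 u‖ / ‖toLp 2 v‖ := by
  rw [map_smul, toEuclideanCLM_vecMulVec, norm_smul, norm_rankOne,
    star_dotProduct_self_eq_norm_sq, norm_inv, norm_pow, RCLike.norm_ofReal, abs_norm]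
  rcases eq_or_ne ‖toLp 2 v‖ 0 with h | h
  · simp [h]
  · field_simp

theorem Matrix.normalized_vecMulVec_mulVec_self {v : ι → 𝕜} (hv : v ≠ 0) (u : ι → 𝕜) :
    ((star v ⬝ᵥ v)⁻¹ • vecMulVec u (star v)) *ᵥ v = u := by
  rw [smul_mulVec, vecMulVec_mulVec, op_smul_eq_smul, smul_smul, inv_mul_cancel₀, one_smul]
  rw [star_dotProduct_self_eq_norm_sq]
  simpa using hv

theorem EuclideanSpace.norm_toLp_sum_ite_eq {κ : Type*} [Fintype κ] [DecidableEq κ]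
    {e : ι → κ} (he : Function.Injective e) (w : ι → 𝕜) :
    ‖toLp 2 (fun k => ∑ t, if k = e t then w t else 0)‖ = ‖toLp 2 w‖ := by
  simp only [EuclideanSpace.norm_eq]
  congr 1
  symm
  refine Finset.sum_of_injOn e he.injOn (by simp) ?_ ?_
  · intro k _ hk
    have : ∀ t, k ≠ e t := fun t h => hk ⟨t, by simp, h.symm⟩
    simp [this]
  · intro t _
    rw [Finset.sum_eq_single_of_mem t (Finset.mem_univ t) fun s _ hs => if_neg (he.ne hs.symm),
      if_pos rfl]

end

theorem lp.map_eq_sum_of_map_single_eq_zero {α 𝕜 F : Type*} [NormedField 𝕜]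
    [NormedAddCommGroup F] [NormedSpace 𝕜 F] [DecidableEq α] {p : ℝ≥0∞} [Fact (1 ≤ p)]
    (hp : p ≠ ⊤) (f : lp (fun _ : α => 𝕜) p →L[𝕜] F) (s : Finset α)
    (hs : ∀ j ∉ s, f (lp.single p j 1) = 0) (v : lp (fun _ : α => 𝕜) p) :
    f v = ∑ j ∈ s, v j • f (lp.single p j 1) := by
  have hsingle : ∀ j, f (lp.single p j (v j)) = v j • f (lp.single p j 1) := fun j => by
    rw [← map_smul, ← lp.single_smul, smul_eq_mul, mul_one]
  refine (f.hasSum (lp.hasSum_single hp v)).unique ?_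
  simp only [hsingle]
  exact hasSum_sum_of_ne_finset_zero fun j hj => by rw [hs j hj, smul_zero]

theorem sum_range_toeplitz_row_eq {R : Type*} [Semiring R] {n N i : ℕ} (a : ℤ → R)
    (ha : ∀ k : ℤ, (n : ℤ) < k → a k = 0) (x : ℕ → R) (hi : i < N) :
    ∑ j ∈ range (i + n + 1), a (j - i) * x j =
      ∑ j ∈ range N, a (j - i) * x j +
        ∑ t ∈ range n, a ((N + t : ℕ) - i) * x (N + t) := by
  rw [← sum_range_add]
  refine sum_subset (range_subset_range.2 (by omega)) fun j _ hj => ?_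
  rw [ha _ (by simp only [mem_range, not_lt] at hj; omega), zero_mul]

theorem lowerToeplitz_mulVec_apply {R : Type*} [Semiring R] {n : ℕ} {a : ℤ → R}
    (ha : ∀ k : ℤ, (n : ℤ) < k → a k = 0) {Y : Matrix (Fin n) (Fin n) R}
    (hY : ∀ l t : Fin n,
      Y l t = if (t : ℕ) ≤ (l : ℕ) then a ((n : ℤ) - (l : ℕ) + (t : ℕ)) else 0)
    (w : Fin n → R) (l : Fin n) :
    (Y.mulVec w) l = ∑ t : Fin n, a ((n : ℤ) - (l : ℕ) + (t : ℕ)) * w t := by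
  rw [Matrix.mulVec, dotProduct]
  refine sum_congr rfl fun t _ => ?_
  rw [hY]
  split_ifs with h
  · rfl
  · rw [ha _ (by omega), zero_mul]

theorem sum_ite_lowerToeplitz_mulVec_eq {R : Type*} [Semiring R] {n N : ℕ} (hnN : n ≤ N)
    {a : ℤ → R} (ha : ∀ k : ℤ, (n : ℤ) < k → a k = 0) {Y : Matrix (Fin n) (Fin n) R}
    (hY : ∀ l t : Fin n,
      Y l t = if (t : ℕ) ≤ (l : ℕ) then a ((n : ℤ) - (l : ℕ) + (t : ℕ)) else 0)
    (w : Fin n → R) {i : ℕ} (hi : i < N) :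
    (∑ t : Fin n, if i = N - n + (t : ℕ) then Y.mulVec w t else 0) =
      ∑ t : Fin n, a ((N + t : ℕ) - i) * w t := by
  rcases lt_or_ge i (N - n) with hlow | hhigh
  · rw [sum_eq_zero fun t _ => if_neg (by omega), sum_eq_zero fun t _ => ?_]
    rw [ha _ (by omega), zero_mul]
  · let l : Fin n := ⟨i - (N - n), by omega⟩
    rw [sum_eq_single_of_mem l (mem_univ l) fun t _ htl => if_neg fun h => htl (Fin.ext (by
      simp only [l]; omega)), if_pos (by simp only [l]; omega), lowerToeplitz_mulVec_apply ha hY]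
    refine sum_congr rfl fun t _ => ?_
    congr 2
    simp only [l]
    omega

theorem finiteSection_mulVec_add_eq {n N : ℕ} (hnN : n ≤ N) {a : ℤ → ℂ}
    (ha : ∀ k : ℤ, (n : ℤ) < k → a k = 0) {T E : ell2 →L[ℂ] ell2}
    (hT : ∀ (v : ell2) (i : ℕ),
      (T v) i = ∑ j ∈ range (i + n + 1), a ((j : ℤ) - (i : ℤ)) * v j)
    (hE : ∀ j ∉ range N, E (lp.single 2 j 1) = 0) {lam : ℂ} {v : ell2}
    (heig : T v + E v = lam • v) {AN : Matrix (Fin N) (Fin N) ℂ}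
    (hAN : ∀ i j : Fin N,
      AN i j = a ((j : ℤ) - (i : ℤ)) + (E (lp.single 2 (j : ℕ) 1)) (i : ℕ))
    {vN : Fin N → ℂ} (hvN : ∀ i : Fin N, vN i = v (i : ℕ))
    {wN : Fin n → ℂ} (hwN : ∀ t : Fin n, wN t = v (N + (t : ℕ)))
    {Y : Matrix (Fin n) (Fin n) ℂ}
    (hY : ∀ l t : Fin n,
      Y l t = if (t : ℕ) ≤ (l : ℕ) then a ((n : ℤ) - (l : ℕ) + (t : ℕ)) else 0)
    {uN : Fin N → ℂ}
    (huN : ∀ i : Fin N,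
      uN i = ∑ t : Fin n, if (i : ℕ) = N - n + (t : ℕ) then Y.mulVec wN t else 0) :
    AN *ᵥ vN + uN = lam • vN := by
  funext i
  have hAi : (AN *ᵥ vN) i =
      ∑ j ∈ range N, a (j - i) * v j + ∑ j ∈ range N, v j * E (lp.single 2 j 1) i := by
    rw [mulVec, dotProduct, ← sum_add_distrib,
      ← Fin.sum_univ_eq_sum_range (fun j => a (j - i) * v j + v j * E (lp.single 2 j 1) i)]
    refine sum_congr rfl fun j _ => ?_
    rw [hAN, hvN]
    ring
  have hui : uN i = ∑ t ∈ range n, a ((N + t : ℕ) - i) * v (N + t) := by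
    rw [huN, sum_ite_lowerToeplitz_mulVec_eq hnN ha hY wN i.isLt,
      ← Fin.sum_univ_eq_sum_range (fun t => a ((N + t : ℕ) - i) * v (N + t))]
    simp only [hwN]
  have hTi : T v i = ∑ j ∈ range N, a (j - i) * v j +
      ∑ t ∈ range n, a ((N + t : ℕ) - i) * v (N + t) := by
    rw [hT, sum_range_toeplitz_row_eq a ha v i.isLt]
  have hEi : E v i = ∑ j ∈ range N, v j * E (lp.single 2 j 1) i := by
    rw [lp.map_eq_sum_of_map_single_eq_zero (by simp) E _ hE v, lp.coeFn_sum, Finset.sum_apply]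
    rfl
  have heig_i : T v i + E v i = lam * v i := congrArg (fun x : ell2 => x i) heig
  rw [Pi.add_apply, Pi.smul_apply, smul_eq_mul, hAi, hui, hvN, ← heig_i, hTi, hEi]
  ring

theorem stmt_18_general (m n : ℕ) (a : ℤ → ℂ)
    (hsupp : ∀ k : ℤ, (k < -(m : ℤ) ∨ (n : ℤ) < k) → a k = 0)
    (k₁ k₂ : ℕ)
    (T E A : ell2 →L[ℂ] ell2)
    (hT : ∀ (v : ell2) (i : ℕ),
      (T v) i = ∑ j ∈ Finset.range (i + n + 1), a ((j : ℤ) - (i : ℤ)) * v j)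
    (hE : ∀ i j : ℕ, (k₁ ≤ i ∨ k₂ ≤ j) → (E (lp.single 2 j 1)) i = 0)
    (hA : A = T + E)
    (lam : ℂ) (v : ell2) (heig : A v = lam • v)
    (N : ℕ) (hNn : n < N) (hNk₂ : k₂ < N)
    (AN : Matrix (Fin N) (Fin N) ℂ)
    (hAN : ∀ i j : Fin N, AN i j =
      a ((j : ℤ) - (i : ℤ)) + (E (lp.single 2 (j : ℕ) 1)) (i : ℕ))
    (vN : Fin N → ℂ) (hvN : ∀ i : Fin N, vN i = v (i : ℕ)) (hvN0 : vN ≠ 0)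
    (wN : Fin n → ℂ) (hwN : ∀ t : Fin n, wN t = v (N + (t : ℕ)))
    (Y : Matrix (Fin n) (Fin n) ℂ)
    (hY : ∀ l t : Fin n, Y l t =
      if (t : ℕ) ≤ (l : ℕ) then a ((n : ℤ) - (l : ℕ) + (t : ℕ)) else 0)
    (uN : Fin N → ℂ)
    (huN : ∀ i : Fin N, uN i =
      ∑ t : Fin n, if (i : ℕ) = N - n + (t : ℕ) then Y.mulVec wN t else 0)
    (CN : Matrix (Fin N) (Fin N) ℂ)
    (hCN : ∀ i j : Fin N, CN i j =
      uN i * (starRingEnd ℂ) (vN j) / (∑ l : Fin N, (starRingEnd ℂ) (vN l) * vN l)) :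
    AN.mulVec vN + uN = lam • vN ∧
    (AN + CN).mulVec vN = lam • vN ∧
    ‖Matrix.toEuclideanCLM (𝕜 := ℂ) CN‖ ≤
      ‖Matrix.toEuclideanCLM (𝕜 := ℂ) Y‖ * ‖(WithLp.equiv 2 (Fin n → ℂ)).symm wN‖ /
        ‖(WithLp.equiv 2 (Fin N → ℂ)).symm vN‖ := by
  have hEcol : ∀ j ∉ range N, E (lp.single 2 j 1) = 0 := fun j hj => by
    ext i
    simpa using hE i j (Or.inr (by simp only [mem_range, not_lt] at hj; omega))
  have hsection : AN *ᵥ vN + uN = lam • vN :=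
    finiteSection_mulVec_add_eq hNn.le (fun k hk => hsupp k (Or.inr hk)) hT hEcol
      (by rwa [hA] at heig) hAN hvN hwN hY huN
  have hCN_rankOne : CN = (star vN ⬝ᵥ vN)⁻¹ • vecMulVec uN (star vN) := by
    ext i j
    simp [hCN, vecMulVec, dotProduct, div_eq_inv_mul]
  have hCv : CN *ᵥ vN = uN := hCN_rankOne ▸ normalized_vecMulVec_mulVec_self hvN0 uN
  refine ⟨hsection, by rw [add_mulVec, hCv, hsection], ?_⟩
  let e : Fin n → Fin N := fun t => ⟨N - n + t, by omega⟩
  have hu : ‖toLp 2 uN‖ = ‖toLp 2 (Y *ᵥ wN)‖ := by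
    have huN' : uN = fun i => ∑ t, if i = e t then (Y *ᵥ wN) t else 0 := by
      funext i
      simp [huN, e, Fin.ext_iff]
    rw [huN', EuclideanSpace.norm_toLp_sum_ite_eq fun s t hst => Fin.ext (by simpa [e] using hst)]
  rw [WithLp.equiv_symm_apply, WithLp.equiv_symm_apply, hCN_rankOne,
    norm_toEuclideanCLM_normalized_vecMulVec, hu, ← toEuclideanCLM_toLp]
  gcongr
  exact ContinuousLinearMap.le_opNorm _ _

/-- finite-section identity with rank-one correction: for an eigenpair
`(λ, v)` of `A = T(a) + E` and `N > max(m, n, k₁, k₂)`, with `v_N` the first `N` entries of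
`v`, `w_N` the next `n` entries, `Y` the `n×n` lower triangular Toeplitz matrix with first
column `(a_n, …, a_1)ᵀ`, `u_N` the vector with first `N−n` entries `0` and last `n` entries
`Y w_N`, and `A_N` the `N×N` finite section of `A`, one has `A_N v_N + u_N = λ v_N`;
moreover `C_N = u_N v_N^⋆/(v_N^⋆ v_N)` satisfies `(A_N + C_N) v_N = λ v_N` and
`‖C_N‖₂ ≤ ‖Y‖₂ ‖w_N‖₂ / ‖v_N‖₂`. -/
theorem stmt_18 (m n : ℕ) (hm : 1 ≤ m) (hn : 1 ≤ n) (a : ℤ → ℂ)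
    (ham : a (-(m : ℤ)) ≠ 0) (han : a (n : ℤ) ≠ 0)
    (hsupp : ∀ k : ℤ, (k < -(m : ℤ) ∨ (n : ℤ) < k) → a k = 0)
    (k₁ k₂ : ℕ) (hk₁ : 1 ≤ k₁) (hk₂ : 1 ≤ k₂)
    (T E A : ell2 →L[ℂ] ell2)
    (hT : ∀ (v : ell2) (i : ℕ),
      (T v) i = ∑ j ∈ Finset.range (i + n + 1), a ((j : ℤ) - (i : ℤ)) * v j)
    (hE : ∀ i j : ℕ, (k₁ ≤ i ∨ k₂ ≤ j) → (E (lp.single 2 j 1)) i = 0)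
    (hA : A = T + E)
    (lam : ℂ) (v : ell2) (hv0 : v ≠ 0) (heig : A v = lam • v)
    (N : ℕ) (hNm : m < N) (hNn : n < N) (hNk₁ : k₁ < N) (hNk₂ : k₂ < N)
    (AN : Matrix (Fin N) (Fin N) ℂ)
    (hAN : ∀ i j : Fin N, AN i j =
      a ((j : ℤ) - (i : ℤ)) + (E (lp.single 2 (j : ℕ) 1)) (i : ℕ))
    (vN : Fin N → ℂ) (hvN : ∀ i : Fin N, vN i = v (i : ℕ)) (hvN0 : vN ≠ 0)
    (wN : Fin n → ℂ) (hwN : ∀ t : Fin n, wN t = v (N + (t : ℕ)))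
    (Y : Matrix (Fin n) (Fin n) ℂ)
    (hY : ∀ l t : Fin n, Y l t =
      if (t : ℕ) ≤ (l : ℕ) then a ((n : ℤ) - (l : ℕ) + (t : ℕ)) else 0)
    (uN : Fin N → ℂ)
    (huN : ∀ i : Fin N, uN i =
      ∑ t : Fin n, if (i : ℕ) = N - n + (t : ℕ) then Y.mulVec wN t else 0)
    (CN : Matrix (Fin N) (Fin N) ℂ)
    (hCN : ∀ i j : Fin N, CN i j =
      uN i * (starRingEnd ℂ) (vN j) / (∑ l : Fin N, (starRingEnd ℂ) (vN l) * vN l)) :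
    AN.mulVec vN + uN = lam • vN ∧
    (AN + CN).mulVec vN = lam • vN ∧
    ‖Matrix.toEuclideanCLM (𝕜 := ℂ) CN‖ ≤
      ‖Matrix.toEuclideanCLM (𝕜 := ℂ) Y‖ * ‖(WithLp.equiv 2 (Fin n → ℂ)).symm wN‖ /
        ‖(WithLp.equiv 2 (Fin N → ℂ)).symm vN‖ :=
  stmt_18_general m n a hsupp k₁ k₂ T E A hT hE hA lam v heig N hNn hNk₂ AN hAN vN hvN hvN0 wN hwN Y
    hY uN huN CN hCN
end
end

section
/- Hermitian finite-section approximation: in addition to the setting of the finite-section identity, assume the N×N matrix A_N is Hermitian (A_N^* = A_N). Let (λ, v) be an eigenpair of A with v ∈ ℓ², v ≠ 0, N > max(m, n, k₁, k₂), v_N = (v_1, …, v_N)ᵀ ≠ 0, w_N = (v_{N+1}, …, v_{N+n})ᵀ, and Y the n×n lower triangular Toeplitz matrix with entries Y_{ℓ,t} = a_{n−ℓ+t} for t ≤ ℓ and 0 otherwise. Then there exists an eigenvalue μ of A_N such that |λ − μ| ≤ ‖Y‖₂ ‖w_N‖₂ / ‖v_N‖₂. -/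
open scoped ENNReal

noncomputable section

/-!
Expanding a vector in an orthonormal eigenbasis of a Hermitian matrix shows that the distance
from `λ` to its spectrum, times `‖x‖`, is at most the residual `‖A_N x - λ x‖`. For `x = v_N`,
the `i`-th row of `A v = λ v` differs from that of `A_N v_N` only by the band entries of `T(a)`
reaching past column `N`, so the residual is `-(0, …, 0, Y w_N)`: it has the norm of `Y w_N`,
which is at most `‖Y‖₂ ‖w_N‖₂`.
-/

open Module End
open scoped Matrix

section SymmetricResidual

variable {𝕜 E : Type*} [RCLike 𝕜] [NormedAddCommGroup E] [InnerProductSpace 𝕜 E]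
  [FiniteDimensional 𝕜 E] [Nontrivial E]

theorem LinearMap.IsSymmetric.exists_hasEigenvalue_norm_sub_mul_le {T : E →ₗ[𝕜] E}
    (hT : T.IsSymmetric) (c : 𝕜) (x : E) :
    ∃ μ, HasEigenvalue T μ ∧ ‖c - μ‖ * ‖x‖ ≤ ‖T x - c • x‖ := by
  set b := hT.eigenvectorBasis rfl
  set d := hT.eigenvalues rfl
  have : Nonempty (Fin (finrank 𝕜 E)) := ⟨⟨0, finrank_pos⟩⟩
  obtain ⟨i₀, -, hmin⟩ := Finset.univ.exists_min_image (fun i => ‖c - (d i : 𝕜)‖)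
    Finset.univ_nonempty
  refine ⟨d i₀, hT.hasEigenvalue_eigenvalues rfl i₀, ?_⟩
  have hcoord : ∀ i, ‖b.repr (T x - c • x) i‖ = ‖c - (d i : 𝕜)‖ * ‖b.repr x i‖ := by
    intro i
    rw [map_sub, map_smul, PiLp.sub_apply, PiLp.smul_apply, hT.eigenvectorBasis_apply_self_apply,
      smul_eq_mul, ← sub_mul, norm_mul, norm_sub_rev]
  rw [← b.repr.norm_map x, ← b.repr.norm_map (T x - c • x)]
  refine le_of_sq_le_sq ?_ (norm_nonneg _)
  rw [mul_pow, EuclideanSpace.norm_sq_eq, EuclideanSpace.norm_sq_eq, Finset.mul_sum]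
  gcongr with i
  rw [hcoord, mul_pow]
  gcongr
  exact hmin i (Finset.mem_univ i)

end SymmetricResidual

theorem Matrix.IsHermitian.exists_mem_spectrum_norm_sub_mul_le {𝕜 ι : Type*} [RCLike 𝕜]
    [Fintype ι] [DecidableEq ι] [Nonempty ι] {A : Matrix ι ι 𝕜} (hA : A.IsHermitian) (c : 𝕜)
    (x : EuclideanSpace 𝕜 ι) :
    ∃ μ ∈ spectrum 𝕜 A, ‖c - μ‖ * ‖x‖ ≤ ‖Matrix.toEuclideanCLM (𝕜 := 𝕜) A x - c • x‖ := by
  obtain ⟨μ, hμ, hle⟩ :=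
    (Matrix.isSymmetric_toEuclideanLin_iff.mpr hA).exists_hasEigenvalue_norm_sub_mul_le c x
  refine ⟨μ, ?_, hle⟩
  rw [← Matrix.spectrum_toLpLin 2]
  exact hasEigenvalue_iff_mem_spectrum.mp hμ

theorem ContinuousLinearMap.apply_eq_sum_of_single_eq_zero {𝕜 F : Type*}
    [NontriviallyNormedField 𝕜] [NormedAddCommGroup F] [NormedSpace 𝕜 F]
    {p : ℝ≥0∞} [Fact (1 ≤ p)] (hp : p ≠ ∞)
    (E : lp (fun _ : ℕ => 𝕜) p →L[𝕜] F) {K : ℕ} (hE : ∀ j, K ≤ j → E (lp.single p j 1) = 0)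
    (v : lp (fun _ : ℕ => 𝕜) p) :
    E v = ∑ j ∈ Finset.range K, v j • E (lp.single p j 1) := by
  have hsum : HasSum (fun j => v j • E (lp.single p j 1)) (E v) := by
    convert E.hasSum (lp.hasSum_single hp v) using 2 with j
    rw [← map_smul, ← lp.single_smul, smul_eq_mul, mul_one]
  refine hsum.unique (hasSum_sum_of_ne_finset_zero fun j hj => ?_)
  rw [hE j (by simpa using hj), smul_zero]

theorem finiteSection_row_sub_eq {n N K : ℕ} {a : ℤ → ℂ} (ha : ∀ k : ℤ, (n : ℤ) < k → a k = 0)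
    {T E : ell2 →L[ℂ] ell2}
    (hT : ∀ (v : ell2) (i : ℕ),
      (T v) i = ∑ j ∈ Finset.range (i + n + 1), a ((j : ℤ) - (i : ℤ)) * v j)
    (hE : ∀ j, K ≤ j → E (lp.single 2 j 1) = 0) (hKN : K ≤ N)
    {lam : ℂ} {v : ell2} (heig : T v + E v = lam • v) {i : ℕ} (hi : i < N) :
    ∑ j ∈ Finset.range N, (a ((j : ℤ) - i) + E (lp.single 2 j 1) i) * v j - lam * v i =
      -∑ t ∈ Finset.range n, a ((N : ℤ) + t - i) * v (N + t) := by
  have heig_i : lam * v i = T v i + E v i := by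
    simpa using congrArg (fun u : ell2 => u i) heig.symm
  have hTv : T v i = ∑ j ∈ Finset.range (N + n), a ((j : ℤ) - i) * v j := by
    rw [hT]
    refine Finset.sum_subset (Finset.range_subset_range.mpr (by omega)) fun j _ hj => ?_
    rw [ha _ (by simp at hj; omega), zero_mul]
  have hEv : E v i = ∑ j ∈ Finset.range N, E (lp.single 2 j 1) i * v j := by
    rw [E.apply_eq_sum_of_single_eq_zero ENNReal.ofNat_ne_top fun j hj => hE j (hKN.trans hj),
      lp.coeFn_sum, Finset.sum_apply]
    simp [mul_comm]
  rw [heig_i, hTv, hEv, Finset.sum_range_add]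
  simp only [add_mul, Finset.sum_add_distrib]
  push_cast
  ring

theorem EuclideanSpace.norm_eq_of_injective {𝕜 ι κ : Type*} [RCLike 𝕜] [Fintype ι] [Fintype κ]
    {e : ι → κ} (he : Function.Injective e) {x : EuclideanSpace 𝕜 κ} {y : EuclideanSpace 𝕜 ι}
    (hx : ∀ k ∉ Set.range e, x k = 0) (hxy : ∀ i, x (e i) = y i) : ‖x‖ = ‖y‖ := by
  rw [EuclideanSpace.norm_eq, EuclideanSpace.norm_eq,
    Fintype.sum_of_injective e he (fun i => ‖y i‖ ^ 2) (fun k => ‖x k‖ ^ 2)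
      (fun k hk => by simp [hx k hk]) (fun i => by simp [hxy i])]

section BandedToeplitz

variable {n : ℕ} {a : ℤ → ℂ}

theorem lowerTriangularToeplitz_mulVec_apply (ha : ∀ k : ℤ, (n : ℤ) < k → a k = 0)
    {Y : Matrix (Fin n) (Fin n) ℂ}
    (hY : ∀ l t : Fin n, Y l t =
      if (t : ℕ) ≤ (l : ℕ) then a ((n : ℤ) - (l : ℕ) + (t : ℕ)) else 0)
    (w : Fin n → ℂ) (l : Fin n) :
    (Y *ᵥ w) l = ∑ t : Fin n, a ((n : ℤ) + (t : ℕ) - (l : ℕ)) * w t := by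
  simp only [Matrix.mulVec, dotProduct]
  refine Finset.sum_congr rfl fun t _ => ?_
  rw [hY]
  split_ifs with h
  · rw [sub_add_eq_add_sub]
  · rw [ha _ (by omega), zero_mul]

-- The vector below is `Y w` preceded by `N - n` zeros.
theorem norm_toLp_toeplitzTail_eq_norm_mulVec (ha : ∀ k : ℤ, (n : ℤ) < k → a k = 0)
    {Y : Matrix (Fin n) (Fin n) ℂ}
    (hY : ∀ l t : Fin n, Y l t =
      if (t : ℕ) ≤ (l : ℕ) then a ((n : ℤ) - (l : ℕ) + (t : ℕ)) else 0)
    {N : ℕ} (hnN : n ≤ N) (w : Fin n → ℂ) :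
    ‖WithLp.toLp 2 (fun i : Fin N => ∑ t : Fin n, a ((N : ℤ) + (t : ℕ) - (i : ℕ)) * w t)‖ =
      ‖WithLp.toLp 2 (Y *ᵥ w)‖ := by
  refine EuclideanSpace.norm_eq_of_injective
    (e := fun l : Fin n => (⟨N - n + l, by omega⟩ : Fin N))
    (fun l l' h => Fin.ext (by simpa using h)) (fun i hi => ?_) (fun l => ?_)
  · rw [WithLp.ofLp_toLp]
    have hin : (i : ℕ) + n < N := by
      by_contra! h
      exact hi ⟨⟨i - (N - n), by omega⟩, Fin.ext (by simp; omega)⟩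
    refine Finset.sum_eq_zero fun t _ => ?_
    rw [ha _ (by omega), zero_mul]
  · rw [WithLp.ofLp_toLp, WithLp.ofLp_toLp, lowerTriangularToeplitz_mulVec_apply ha hY]
    refine Finset.sum_congr rfl fun t _ => ?_
    congr 2
    push_cast [Nat.cast_sub hnN]
    ring

end BandedToeplitz

theorem stmt_19_general (m n : ℕ) (a : ℤ → ℂ)
    (hsupp : ∀ k : ℤ, (k < -(m : ℤ) ∨ (n : ℤ) < k) → a k = 0)
    (k₁ k₂ : ℕ)
    (T E A : ell2 →L[ℂ] ell2)
    (hT : ∀ (v : ell2) (i : ℕ),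
      (T v) i = ∑ j ∈ Finset.range (i + n + 1), a ((j : ℤ) - (i : ℤ)) * v j)
    (hE : ∀ i j : ℕ, (k₁ ≤ i ∨ k₂ ≤ j) → (E (lp.single 2 j 1)) i = 0)
    (hA : A = T + E)
    (lam : ℂ) (v : ell2) (heig : A v = lam • v)
    (N : ℕ) (hNn : n < N) (hNk₂ : k₂ < N)
    (AN : Matrix (Fin N) (Fin N) ℂ)
    (hAN : ∀ i j : Fin N, AN i j =
      a ((j : ℤ) - (i : ℤ)) + (E (lp.single 2 (j : ℕ) 1)) (i : ℕ))
    (hherm : AN.IsHermitian)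
    (vN : Fin N → ℂ) (hvN : ∀ i : Fin N, vN i = v (i : ℕ)) (hvN0 : vN ≠ 0)
    (wN : Fin n → ℂ) (hwN : ∀ t : Fin n, wN t = v (N + (t : ℕ)))
    (Y : Matrix (Fin n) (Fin n) ℂ)
    (hY : ∀ l t : Fin n, Y l t =
      if (t : ℕ) ≤ (l : ℕ) then a ((n : ℤ) - (l : ℕ) + (t : ℕ)) else 0) :
    ∃ μ ∈ spectrum ℂ AN,
      ‖lam - μ‖ ≤
        ‖Matrix.toEuclideanCLM (𝕜 := ℂ) Y‖ * ‖(WithLp.equiv 2 (Fin n → ℂ)).symm wN‖ /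
          ‖(WithLp.equiv 2 (Fin N → ℂ)).symm vN‖ := by
  set vE := (WithLp.equiv 2 (Fin N → ℂ)).symm vN
  set wE := (WithLp.equiv 2 (Fin n → ℂ)).symm wN
  have hvE0 : vE ≠ 0 := by simpa [vE] using hvN0
  have ha : ∀ k : ℤ, (n : ℤ) < k → a k = 0 := fun k hk => hsupp k (Or.inr hk)
  have hEcol : ∀ j, k₂ ≤ j → E (lp.single 2 j 1) = 0 := fun j hj =>
    lp.ext (funext fun i => by simpa using hE i j (Or.inr hj))
  have hTE : T v + E v = lam • v := by rw [← heig, hA]; rfl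
  have hresidual : Matrix.toEuclideanCLM (𝕜 := ℂ) AN vE - lam • vE =
      -WithLp.toLp 2 (fun i : Fin N => ∑ t : Fin n, a ((N : ℤ) + (t : ℕ) - (i : ℕ)) * wN t) := by
    ext i
    have hrow := finiteSection_row_sub_eq ha hT hEcol hNk₂.le hTE i.isLt
    rw [← Fin.sum_univ_eq_sum_range, ← Fin.sum_univ_eq_sum_range] at hrow
    simpa [vE, Matrix.mulVec, dotProduct, hAN, hvN, hwN] using hrow
  have : Nonempty (Fin N) := ⟨⟨0, Nat.zero_lt_of_lt hNn⟩⟩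
  obtain ⟨μ, hμ, hle⟩ := hherm.exists_mem_spectrum_norm_sub_mul_le lam vE
  refine ⟨μ, hμ, (le_div_iff₀ (norm_pos_iff.mpr hvE0)).mpr ?_⟩
  calc ‖lam - μ‖ * ‖vE‖ ≤ ‖Matrix.toEuclideanCLM (𝕜 := ℂ) AN vE - lam • vE‖ := hle
    _ = ‖Matrix.toEuclideanCLM (𝕜 := ℂ) Y wE‖ := by
      rw [hresidual, norm_neg, norm_toLp_toeplitzTail_eq_norm_mulVec ha hY hNn.le]
      simp [wE]
    _ ≤ ‖Matrix.toEuclideanCLM (𝕜 := ℂ) Y‖ * ‖wE‖ := ContinuousLinearMap.le_opNorm _ _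

/-- Hermitian finite-section approximation: in the setting of the
finite-section identity, if additionally the finite section `A_N` is Hermitian, then some
eigenvalue `μ` of `A_N` satisfies `|λ − μ| ≤ ‖Y‖₂ ‖w_N‖₂ / ‖v_N‖₂`. -/
theorem stmt_19 (m n : ℕ) (hm : 1 ≤ m) (hn : 1 ≤ n) (a : ℤ → ℂ)
    (ham : a (-(m : ℤ)) ≠ 0) (han : a (n : ℤ) ≠ 0)
    (hsupp : ∀ k : ℤ, (k < -(m : ℤ) ∨ (n : ℤ) < k) → a k = 0)
    (k₁ k₂ : ℕ) (hk₁ : 1 ≤ k₁) (hk₂ : 1 ≤ k₂)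
    (T E A : ell2 →L[ℂ] ell2)
    (hT : ∀ (v : ell2) (i : ℕ),
      (T v) i = ∑ j ∈ Finset.range (i + n + 1), a ((j : ℤ) - (i : ℤ)) * v j)
    (hE : ∀ i j : ℕ, (k₁ ≤ i ∨ k₂ ≤ j) → (E (lp.single 2 j 1)) i = 0)
    (hA : A = T + E)
    (lam : ℂ) (v : ell2) (hv0 : v ≠ 0) (heig : A v = lam • v)
    (N : ℕ) (hNm : m < N) (hNn : n < N) (hNk₁ : k₁ < N) (hNk₂ : k₂ < N)
    (AN : Matrix (Fin N) (Fin N) ℂ)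
    (hAN : ∀ i j : Fin N, AN i j =
      a ((j : ℤ) - (i : ℤ)) + (E (lp.single 2 (j : ℕ) 1)) (i : ℕ))
    (hherm : AN.IsHermitian)
    (vN : Fin N → ℂ) (hvN : ∀ i : Fin N, vN i = v (i : ℕ)) (hvN0 : vN ≠ 0)
    (wN : Fin n → ℂ) (hwN : ∀ t : Fin n, wN t = v (N + (t : ℕ)))
    (Y : Matrix (Fin n) (Fin n) ℂ)
    (hY : ∀ l t : Fin n, Y l t =
      if (t : ℕ) ≤ (l : ℕ) then a ((n : ℤ) - (l : ℕ) + (t : ℕ)) else 0) :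
    ∃ μ ∈ spectrum ℂ AN,
      ‖lam - μ‖ ≤
        ‖Matrix.toEuclideanCLM (𝕜 := ℂ) Y‖ * ‖(WithLp.equiv 2 (Fin n → ℂ)).symm wN‖ /
          ‖(WithLp.equiv 2 (Fin N → ℂ)).symm vN‖ :=
  stmt_19_general m n a hsupp k₁ k₂ T E A hT hE hA lam v heig N hNn hNk₂ AN hAN hherm vN hvN hvN0 wN
    hwN Y hY
end
end
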